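/- arXiv:1607.02753 — 7 statements merged into one kernel-verified Lean document; each statement's English description precedes it below -/
import Mathlib

section
/- Let n ≥ 1. Let f, g : ℝⁿ → [0,∞) be convex functions that are C² on a neighborhood of 0 with f(0) = 0 = g(0); for x ∈ ℝⁿ let σ_x(y) = f(y) + g(x − y), and assume Hess σ₀|_{y=0} is positive definite. Then there exist a neighborhood U of 0 in ℝⁿ and a C¹ map μ : U → ℝⁿ with μ(0) = 0 such that for every x ∈ U and every y ∈ ℝⁿ with y ≠ μ(x) one has σ_x(y) > σ_x(μ(x)) (i.e., μ(x) is the unique global minimizer of σ_x). -/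
/-!
The gradient of `σ_x` at `y` is `F (x, y) = f'(y) - g'(x - y)`. It is `C¹` near `(0, 0)`, it
vanishes there because `0` minimises both `f` and `g`, and its `y`-derivative at `(0, 0)` is the
Hessian of `σ₀`, hence invertible. The implicit function theorem yields a `C¹` map `μ` such that,
near `(0, 0)`, the zeros of `F` are exactly the points `(x, μ x)`. A critical point of the convex
function `σ_x` is a global minimiser, so `μ x` minimises `σ_x`. The minimisers of `σ_x` form a
convex set, and those near `μ x` are critical points, hence equal to `μ x`; a convex set with an
isolated point is a singleton.
-/

open Set Filter Topology

section Convex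

variable {E : Type*} [NormedAddCommGroup E] [NormedSpace ℝ E]

theorem ConvexOn.isMinOn_of_hasFDerivAt_eq_zero {φ : E → ℝ} (hφ : ConvexOn ℝ univ φ) {m : E}
    (hm : HasFDerivAt φ (0 : E →L[ℝ] ℝ) m) : IsMinOn φ univ m := by
  intro y _
  have hline : ConvexOn ℝ univ (φ ∘ AffineMap.lineMap (k := ℝ) m y) := by
    simpa using hφ.comp_affineMap (AffineMap.lineMap m y : ℝ →ᵃ[ℝ] E)
  have hderiv : HasDerivAt (φ ∘ AffineMap.lineMap (k := ℝ) m y) 0 0 := by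
    have hm' : HasFDerivAt φ (0 : E →L[ℝ] ℝ) (AffineMap.lineMap m y (0 : ℝ)) := by simpa using hm
    simpa using hm'.comp_hasDerivAt (0 : ℝ) AffineMap.hasDerivAt_lineMap
  simpa [slope_def_field] using
    hline.le_slope_of_hasDerivAt (mem_univ 0) (mem_univ 1) one_pos hderiv

theorem Convex.eq_of_mem_of_isolated {s : Set E} (hs : Convex ℝ s) {m y : E} (hm : m ∈ s)
    (hy : y ∈ s) (hiso : ∀ᶠ z in 𝓝 m, z ∈ s → z = m) : y = m := by
  have hlim : Tendsto (fun t : ℝ => m + t • (y - m)) (𝓝[>] 0) (𝓝 m) := by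
    have : Continuous fun t : ℝ => m + t • (y - m) := by fun_prop
    simpa using (this.tendsto 0).mono_left nhdsWithin_le_nhds
  obtain ⟨t, hmt, ht⟩ := ((hlim.eventually hiso).and (Ioo_mem_nhdsGT one_pos)).exists
  have := hmt (hs.add_smul_sub_mem hm hy ⟨ht.1.le, ht.2.le⟩)
  simpa [ht.1.ne', sub_eq_zero] using this

theorem ConvexOn.lt_of_isolated_critical {φ : E → ℝ} (hφ : ConvexOn ℝ univ φ)
    {φ' : E → E →L[ℝ] ℝ} {m : E}
    (hcrit : ∀ᶠ z in 𝓝 m, HasFDerivAt φ (φ' z) z ∧ (φ' z = 0 ↔ z = m)) {y : E} (hy : y ≠ m) :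
    φ m < φ y := by
  have hmin : IsMinOn φ univ m := by
    obtain ⟨hm, hm0⟩ := hcrit.self_of_nhds
    exact hφ.isMinOn_of_hasFDerivAt_eq_zero (hm0.2 rfl ▸ hm)
  by_contra! hle
  refine hy ((hφ.convex_le (φ m)).eq_of_mem_of_isolated ⟨mem_univ m, le_rfl⟩
    ⟨mem_univ y, hle⟩ ?_)
  filter_upwards [hcrit] with z ⟨hz, hz0⟩ hzS
  have hloc : IsLocalMin φ z := .of_forall fun w => hzS.2.trans (hmin (mem_univ w))
  exact hz0.1 (hloc.hasFDerivAt_eq_zero hz)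

end Convex

theorem ContinuousLinearMap.isInvertible_of_pos_apply_self {E : Type*} [NormedAddCommGroup E]
    [NormedSpace ℝ E] [FiniteDimensional ℝ E] (Q : E →L[ℝ] E →L[ℝ] ℝ)
    (hQ : ∀ v ≠ 0, 0 < Q v v) : Q.IsInvertible := by
  have hinj : Function.Injective Q := by
    refine (injective_iff_map_eq_zero Q).2 fun v hv => ?_
    by_contra hne
    simpa [hv] using hQ v hne
  have hdim : Module.finrank ℝ E = Module.finrank ℝ (E →L[ℝ] ℝ) := by
    rw [← LinearMap.toContinuousLinearMap.finrank_eq, Module.finrank_linearMap_self]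
  exact ⟨(LinearMap.linearEquivOfInjective (Q : E →ₗ[ℝ] E →L[ℝ] ℝ) hinj hdim).toContinuousLinearEquiv,
    rfl⟩

theorem isOpen_setOf_snd_mem_and_sub_mem {E : Type*} [TopologicalSpace E] [Sub E]
    [ContinuousSub E] {s t : Set E} (hs : IsOpen s) (ht : IsOpen t) :
    IsOpen {p : E × E | p.2 ∈ s ∧ p.1 - p.2 ∈ t} :=
  (hs.preimage continuous_snd).inter (ht.preimage (continuous_fst.sub continuous_snd))

section InfConvolution

variable {E : Type*} [NormedAddCommGroup E] [NormedSpace ℝ E] {f g : E → ℝ} {s t : Set E}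

/-- The gradient of `σ_x : y ↦ f y + g (x - y)` at `y`, as a function of `p = (x, y)`. -/
noncomputable def infConvGrad (f g : E → ℝ) (p : E × E) : E →L[ℝ] ℝ :=
  fderiv ℝ f p.2 - fderiv ℝ g (p.1 - p.2)

theorem ConvexOn.add_comp_sub (hf : ConvexOn ℝ univ f) (hg : ConvexOn ℝ univ g) (x : E) :
    ConvexOn ℝ univ fun y => f y + g (x - y) := by
  refine hf.add ?_
  simpa [Function.comp_def, sub_eq_add_neg] using
    (hg.translate_right x).comp_linearMap (-LinearMap.id)

theorem hasFDerivAt_add_comp_sub {x y : E} (hf : DifferentiableAt ℝ f y)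
    (hg : DifferentiableAt ℝ g (x - y)) :
    HasFDerivAt (fun z => f z + g (x - z)) (infConvGrad f g (x, y)) y := by
  refine (hf.hasFDerivAt.fun_add
    (hg.hasFDerivAt.comp y ((hasFDerivAt_id y).const_sub x))).congr_fderiv ?_
  ext v
  simp [infConvGrad, sub_eq_add_neg]

theorem hasFDerivAt_add_comp_sub_of_contDiffOn (hs : IsOpen s) (ht : IsOpen t)
    (hf : ContDiffOn ℝ 2 f s) (hg : ContDiffOn ℝ 2 g t) {x y : E} (hy : y ∈ s) (hxy : x - y ∈ t) :
    HasFDerivAt (fun z => f z + g (x - z)) (infConvGrad f g (x, y)) y :=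
  hasFDerivAt_add_comp_sub ((hf.differentiableOn two_ne_zero).differentiableAt (hs.mem_nhds hy))
    ((hg.differentiableOn two_ne_zero).differentiableAt (ht.mem_nhds hxy))

theorem contDiffOn_infConvGrad (hs : IsOpen s) (ht : IsOpen t) (hf : ContDiffOn ℝ 2 f s)
    (hg : ContDiffOn ℝ 2 g t) :
    ContDiffOn ℝ 1 (infConvGrad f g) {p : E × E | p.2 ∈ s ∧ p.1 - p.2 ∈ t} :=
  ((hf.fderiv_of_isOpen hs le_rfl).comp contDiffOn_snd fun _ hp => hp.1).sub
    ((hg.fderiv_of_isOpen ht le_rfl).comp (contDiff_fst.sub contDiff_snd).contDiffOn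
      fun _ hp => hp.2)

theorem iteratedFDeriv_two_add_comp_sub (hs : IsOpen s) (ht : IsOpen t)
    (hf : ContDiffOn ℝ 2 f s) (hg : ContDiffOn ℝ 2 g t) {x y : E} (hy : y ∈ s) (hxy : x - y ∈ t)
    (v w : E) :
    iteratedFDeriv ℝ 2 (fun z => f z + g (x - z)) y ![v, w] =
      (fderiv ℝ (infConvGrad f g) (x, y) ∘L .inr ℝ E E) v w := by
  have hD := isOpen_setOf_snd_mem_and_sub_mem hs ht
  have hgrad : fderiv ℝ (fun z => f z + g (x - z)) =ᶠ[𝓝 y] fun z => infConvGrad f g (x, z) := by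
    filter_upwards [(hD.preimage (Continuous.prodMk_right x)).mem_nhds ⟨hy, hxy⟩]
      with z ⟨hz, hxz⟩
    exact (hasFDerivAt_add_comp_sub_of_contDiffOn hs ht hf hg hz hxz).fderiv
  have hF : DifferentiableAt ℝ (infConvGrad f g) (x, y) :=
    ((contDiffOn_infConvGrad hs ht hf hg).differentiableOn one_ne_zero).differentiableAt
      (hD.mem_nhds ⟨hy, hxy⟩)
  have hslice : HasFDerivAt (fun z => infConvGrad f g (x, z))
      (fderiv ℝ (infConvGrad f g) (x, y) ∘L .inr ℝ E E) y :=
    hF.hasFDerivAt.comp y (hasFDerivAt_prodMk_right x y)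
  rw [iteratedFDeriv_two_apply, hgrad.fderiv_eq, hslice.fderiv]
  rfl

end InfConvolution

theorem stmt0_general (n : ℕ)
    (f g : EuclideanSpace ℝ (Fin n) → ℝ)
    (hfnn : ∀ x, 0 ≤ f x) (hgnn : ∀ x, 0 ≤ g x)
    (hfconv : ConvexOn ℝ Set.univ f) (hgconv : ConvexOn ℝ Set.univ g)
    (hfC2 : ∃ V ∈ 𝓝 (0 : EuclideanSpace ℝ (Fin n)), ContDiffOn ℝ 2 f V)
    (hgC2 : ∃ V ∈ 𝓝 (0 : EuclideanSpace ℝ (Fin n)), ContDiffOn ℝ 2 g V)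
    (hf0 : f 0 = 0) (hg0 : g 0 = 0)
    (hσpos : ∀ v : EuclideanSpace ℝ (Fin n), v ≠ 0 →
      0 < iteratedFDeriv ℝ 2 (fun y => f y + g (0 - y)) 0 ![v, v]) :
    ∃ U ∈ 𝓝 (0 : EuclideanSpace ℝ (Fin n)),
      ∃ μ : EuclideanSpace ℝ (Fin n) → EuclideanSpace ℝ (Fin n),
        ContDiffOn ℝ 1 μ U ∧ μ 0 = 0 ∧
        ∀ x ∈ U, ∀ y : EuclideanSpace ℝ (Fin n), y ≠ μ x →
          f (μ x) + g (x - μ x) < f y + g (x - y) := by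
  obtain ⟨Vf, hVf, hfV⟩ := hfC2
  obtain ⟨Vg, hVg, hgV⟩ := hgC2
  obtain ⟨s, hsV, hs, hs0⟩ := mem_nhds_iff.1 (inter_mem hVf hVg)
  have hf := hfV.mono (hsV.trans inter_subset_left)
  have hg := hgV.mono (hsV.trans inter_subset_right)
  have hs0' : (0 : EuclideanSpace ℝ (Fin n)) - 0 ∈ s := by simpa using hs0
  have hD := (isOpen_setOf_snd_mem_and_sub_mem hs hs).mem_nhds (x := (0, 0)) ⟨hs0, hs0'⟩
  have hC1 := (contDiffOn_infConvGrad hs hs hf hg).contDiffAt hD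
  have hF0 : infConvGrad f g (0, 0) = 0 := by
    simp [infConvGrad, IsLocalMin.fderiv_eq_zero (.of_forall fun y => hf0 ▸ hfnn y),
      IsLocalMin.fderiv_eq_zero (.of_forall fun y => hg0 ▸ hgnn y)]
  have hinv : (fderiv ℝ (infConvGrad f g) (0, 0) ∘L .inr ℝ _ _).IsInvertible :=
    ContinuousLinearMap.isInvertible_of_pos_apply_self _ fun v hv => by
      simpa only [iteratedFDeriv_two_add_comp_sub hs hs hf hg hs0 hs0'] using hσpos v hv
  set μ := hC1.implicitFunction one_ne_zero hinv
  have hμ0 : μ 0 = 0 := hC1.implicitFunction_apply_self one_ne_zero hinv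
  have hμC1 := hC1.contDiffAt_implicitFunction one_ne_zero hinv
  obtain ⟨U, hU, hμU⟩ := hμC1.contDiffOn le_rfl (by simp)
  obtain ⟨W, hW, hWo, h0W⟩ := eventually_nhds_iff.1
    ((hC1.eventually_apply_eq_iff_implicitFunction one_ne_zero hinv).and hD)
  have hgraph : {x | (x, μ x) ∈ W} ∈ 𝓝 0 :=
    (continuousAt_id.prodMk hμC1.continuousAt).preimage_mem_nhds
      (hWo.mem_nhds (by simpa [μ, hμ0] using h0W))
  refine ⟨U ∩ {x | (x, μ x) ∈ W}, inter_mem hU hgraph, μ, hμU.mono inter_subset_left, hμ0, ?_⟩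
  rintro x ⟨-, hxW⟩ y hy
  refine (hfconv.add_comp_sub hgconv x).lt_of_isolated_critical
    (φ' := fun z => infConvGrad f g (x, z)) ?_ hy
  filter_upwards [(hWo.preimage (Continuous.prodMk_right x)).mem_nhds hxW] with z hz
  obtain ⟨hiff, hzs, hxzs⟩ := hW _ hz
  exact ⟨hasFDerivAt_add_comp_sub_of_contDiffOn hs hs hf hg hzs hxzs, hF0 ▸ hiff.trans eq_comm⟩

/-- Lemma 2.1(a) of the paper. If `f`, `g` are nonnegative convex functions
on `ℝⁿ` that are `C²` near `0` with `f 0 = 0 = g 0`, and the Hessian of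
`σ₀ : y ↦ f y + g (0 - y)` at `y = 0` is positive definite, then there are a neighborhood
`U` of `0` and a `C¹` map `μ : U → ℝⁿ` with `μ 0 = 0` such that `μ x` is the unique global
minimizer of `σ_x : y ↦ f y + g (x - y)` for every `x ∈ U`. -/
theorem stmt0 (n : ℕ) (hn : 1 ≤ n)
    (f g : EuclideanSpace ℝ (Fin n) → ℝ)
    (hfnn : ∀ x, 0 ≤ f x) (hgnn : ∀ x, 0 ≤ g x)
    (hfconv : ConvexOn ℝ Set.univ f) (hgconv : ConvexOn ℝ Set.univ g)
    (hfC2 : ∃ V ∈ 𝓝 (0 : EuclideanSpace ℝ (Fin n)), ContDiffOn ℝ 2 f V)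
    (hgC2 : ∃ V ∈ 𝓝 (0 : EuclideanSpace ℝ (Fin n)), ContDiffOn ℝ 2 g V)
    (hf0 : f 0 = 0) (hg0 : g 0 = 0)
    (hσpos : ∀ v : EuclideanSpace ℝ (Fin n), v ≠ 0 →
      0 < iteratedFDeriv ℝ 2 (fun y => f y + g (0 - y)) 0 ![v, v]) :
    ∃ U ∈ 𝓝 (0 : EuclideanSpace ℝ (Fin n)),
      ∃ μ : EuclideanSpace ℝ (Fin n) → EuclideanSpace ℝ (Fin n),
        ContDiffOn ℝ 1 μ U ∧ μ 0 = 0 ∧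
        ∀ x ∈ U, ∀ y : EuclideanSpace ℝ (Fin n), y ≠ μ x →
          f (μ x) + g (x - μ x) < f y + g (x - y) :=
  stmt0_general n f g hfnn hgnn hfconv hgconv hfC2 hgC2 hf0 hg0 hσpos
end

section
/- Let n ≥ 1. Let f, g : ℝⁿ → [0,∞) be convex functions that are C² on a neighborhood of 0 with f(0) = 0 = g(0); for x ∈ ℝⁿ let σ_x(y) = f(y) + g(x − y), and assume Hess σ₀|_{y=0} is positive definite. Let μ be C¹ on a neighborhood U of 0 with μ(0) = 0 and such that μ(x) is the unique global minimizer of σ_x for each x ∈ U. Then the infimal convolution h = f □ g is C² near 0, and for all x near 0: h(x) = f(μ(x)) + g(x − μ(x)), ∇h(x) = ∇f(μ(x)) = ∇g(x − μ(x)), and Hess h|_x = Hess g|_{x−μ(x)} ∘ (Id − Dμ(x)) = Hess f|_{μ(x)} ∘ Dμ(x), where Dμ(x) denotes the derivative (Jacobian) of μ at x. -/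
/-!
Where `μ x` minimizes `σ_x`, `h x = f (μ x) + g (x - μ x)`, and the first-order condition
`Df (μ x) = Dg (x - μ x)` makes the terms involving `Dμ` cancel when this is differentiated
(envelope theorem): `Dh = Df ∘ μ = Dg ∘ (id - μ)`. The right-hand sides are `C¹`, so `h` is `C²`,
and differentiating them once more, with the symmetry of second derivatives, gives both Hessian
formulas. All hypotheses needed for this at a point hold on a neighbourhood of it
(`IsSmoothArgminAt.eventually`), so the argument at `0` applies near `0`.
-/

open Set Filter Topology

noncomputable section

/-- The infimal convolution `(f □ g)(x) = ⨅ y, f y + g (x - y)`. -/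
def infConv {E : Type*} [NormedAddCommGroup E] (f g : E → ℝ) (x : E) : ℝ :=
  ⨅ y : E, (f y + g (x - y))

theorem infConv_eq_of_forall_le {E : Type*} [NormedAddCommGroup E] {f g : E → ℝ} {x a : E}
    (hmin : ∀ z, f a + g (x - a) ≤ f z + g (x - z)) : infConv f g x = f a + g (x - a) :=
  le_antisymm (ciInf_le ⟨_, forall_mem_range.2 hmin⟩ a) (le_ciInf hmin)

section

variable {E : Type*} [NormedAddCommGroup E] [NormedSpace ℝ E]

theorem fderiv_eq_fderiv_of_isLocalMin {f g : E → ℝ} {x a : E}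
    (hmin : IsLocalMin (fun z => f z + g (x - z)) a)
    (hf : DifferentiableAt ℝ f a) (hg : DifferentiableAt ℝ g (x - a)) :
    fderiv ℝ f a = fderiv ℝ g (x - a) := by
  have hσ := hf.hasFDerivAt.add (hg.hasFDerivAt.comp a ((hasFDerivAt_id a).const_sub x))
  ext v
  simpa [add_neg_eq_zero] using DFunLike.congr_fun (hmin.hasFDerivAt_eq_zero hσ) v

theorem HasFDerivAt.add_comp_sub_self {F : Type*} [NormedAddCommGroup F] [NormedSpace ℝ F]
    {f g : E → F} {μ : E → E} {x : E} {L : E →L[ℝ] F} {M : E →L[ℝ] E}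
    (hf : HasFDerivAt f L (μ x)) (hg : HasFDerivAt g L (x - μ x)) (hμ : HasFDerivAt μ M x) :
    HasFDerivAt (fun y => f (μ y) + g (y - μ y)) L x := by
  have h := (hf.comp x hμ).add (hg.comp x ((hasFDerivAt_id x).sub hμ))
  rwa [← ContinuousLinearMap.comp_add, add_sub_cancel, ContinuousLinearMap.comp_id] at h

theorem iteratedFDeriv_two_apply_of_fderiv_eventuallyEq_comp {F : Type*} [NormedAddCommGroup F]
    [NormedSpace ℝ F] {φ ψ : E → F} {ν : E → E} {x : E}
    (hφ : ContDiffAt ℝ 2 φ x) (hψ : ContDiffAt ℝ 2 ψ (ν x)) (hν : DifferentiableAt ℝ ν x)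
    (heq : fderiv ℝ φ =ᶠ[𝓝 x] fun y => fderiv ℝ ψ (ν y)) (u v : E) :
    iteratedFDeriv ℝ 2 φ x ![u, v] = iteratedFDeriv ℝ 2 ψ (ν x) ![u, fderiv ℝ ν x v] := by
  have hD2 : fderiv ℝ (fderiv ℝ φ) x = (fderiv ℝ (fderiv ℝ ψ) (ν x)).comp (fderiv ℝ ν x) := by
    rw [heq.fderiv_eq]
    exact fderiv_fun_comp x ((hψ.fderiv_right le_rfl).differentiableAt one_ne_zero) hν
  rw [iteratedFDeriv_two_apply, iteratedFDeriv_two_apply]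
  simp only [Matrix.cons_val_zero, Matrix.cons_val_one]
  rw [hφ.isSymmSndFDerivAt (by simp) u v, hD2, ContinuousLinearMap.comp_apply]
  exact hψ.isSymmSndFDerivAt (by simp) _ _

structure IsSmoothArgminAt (f g : E → ℝ) (μ : E → E) (x : E) : Prop where
  isMin : ∀ᶠ y in 𝓝 x, ∀ z, f (μ y) + g (y - μ y) ≤ f z + g (y - z)
  contDiffAt_left : ContDiffAt ℝ 2 f (μ x)
  contDiffAt_right : ContDiffAt ℝ 2 g (x - μ x)
  contDiffAt_argmin : ContDiffAt ℝ 1 μ x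

namespace IsSmoothArgminAt

variable {f g : E → ℝ} {μ : E → E} {x : E}

theorem eventually (h : IsSmoothArgminAt f g μ x) : ∀ᶠ y in 𝓝 x, IsSmoothArgminAt f g μ y := by
  have hμ := h.contDiffAt_argmin.continuousAt
  filter_upwards [h.isMin.eventually_nhds,
    hμ.tendsto.eventually (h.contDiffAt_left.eventually (by simp)),
    (continuousAt_id.sub hμ).tendsto.eventually (h.contDiffAt_right.eventually (by simp)),
    h.contDiffAt_argmin.eventually (by simp)] with y hmin hf hg hμy
  exact ⟨hmin, hf, hg, hμy⟩

theorem infConv_eq (h : IsSmoothArgminAt f g μ x) : infConv f g x = f (μ x) + g (x - μ x) :=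
  infConv_eq_of_forall_le h.isMin.self_of_nhds

theorem fderiv_left_eq_fderiv_right (h : IsSmoothArgminAt f g μ x) :
    fderiv ℝ f (μ x) = fderiv ℝ g (x - μ x) :=
  fderiv_eq_fderiv_of_isLocalMin (Eventually.of_forall h.isMin.self_of_nhds)
    (h.contDiffAt_left.differentiableAt two_ne_zero)
    (h.contDiffAt_right.differentiableAt two_ne_zero)

theorem hasFDerivAt_infConv (h : IsSmoothArgminAt f g μ x) :
    HasFDerivAt (infConv f g) (fderiv ℝ f (μ x)) x := by
  have hg := (h.contDiffAt_right.differentiableAt two_ne_zero).hasFDerivAt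
  rw [← h.fderiv_left_eq_fderiv_right] at hg
  exact ((h.contDiffAt_left.differentiableAt two_ne_zero).hasFDerivAt.add_comp_sub_self hg
    (h.contDiffAt_argmin.differentiableAt one_ne_zero).hasFDerivAt).congr_of_eventuallyEq
    (h.isMin.mono fun y hy => infConv_eq_of_forall_le hy)

theorem fderiv_infConv_eventuallyEq_left (h : IsSmoothArgminAt f g μ x) :
    fderiv ℝ (infConv f g) =ᶠ[𝓝 x] fun y => fderiv ℝ f (μ y) :=
  h.eventually.mono fun _ hy => hy.hasFDerivAt_infConv.fderiv

theorem fderiv_infConv_eventuallyEq_right (h : IsSmoothArgminAt f g μ x) :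
    fderiv ℝ (infConv f g) =ᶠ[𝓝 x] fun y => fderiv ℝ g (y - μ y) :=
  h.eventually.mono fun _ hy => hy.hasFDerivAt_infConv.fderiv.trans hy.fderiv_left_eq_fderiv_right

theorem contDiffAt_infConv (h : IsSmoothArgminAt f g μ x) : ContDiffAt ℝ 2 (infConv f g) x :=
  contDiffAt_succ_iff_hasFDerivAt (n := 1).2 ⟨fun y => fderiv ℝ f (μ y),
    ⟨_, h.eventually, fun _ hy => hy.hasFDerivAt_infConv⟩,
    (h.contDiffAt_left.fderiv_right le_rfl).comp x h.contDiffAt_argmin⟩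

theorem iteratedFDeriv_infConv_two_left (h : IsSmoothArgminAt f g μ x) (u v : E) :
    iteratedFDeriv ℝ 2 (infConv f g) x ![u, v] =
      iteratedFDeriv ℝ 2 f (μ x) ![u, fderiv ℝ μ x v] :=
  iteratedFDeriv_two_apply_of_fderiv_eventuallyEq_comp h.contDiffAt_infConv h.contDiffAt_left
    (h.contDiffAt_argmin.differentiableAt one_ne_zero) h.fderiv_infConv_eventuallyEq_left u v

theorem iteratedFDeriv_infConv_two_right (h : IsSmoothArgminAt f g μ x) (u v : E) :
    iteratedFDeriv ℝ 2 (infConv f g) x ![u, v] =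
      iteratedFDeriv ℝ 2 g (x - μ x) ![u, v - fderiv ℝ μ x v] := by
  have hν : HasFDerivAt (fun y => y - μ y) (ContinuousLinearMap.id ℝ E - fderiv ℝ μ x) x :=
    (hasFDerivAt_id x).sub (h.contDiffAt_argmin.differentiableAt one_ne_zero).hasFDerivAt
  rw [iteratedFDeriv_two_apply_of_fderiv_eventuallyEq_comp h.contDiffAt_infConv
    h.contDiffAt_right hν.differentiableAt h.fderiv_infConv_eventuallyEq_right u v, hν.fderiv]
  rfl

end IsSmoothArgminAt

end

theorem stmt2_general (n : ℕ)
    (f g : EuclideanSpace ℝ (Fin n) → ℝ)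
    (hfC2 : ∃ V ∈ 𝓝 (0 : EuclideanSpace ℝ (Fin n)), ContDiffOn ℝ 2 f V)
    (hgC2 : ∃ V ∈ 𝓝 (0 : EuclideanSpace ℝ (Fin n)), ContDiffOn ℝ 2 g V)
    (U : Set (EuclideanSpace ℝ (Fin n))) (hU : U ∈ 𝓝 (0 : EuclideanSpace ℝ (Fin n)))
    (μ : EuclideanSpace ℝ (Fin n) → EuclideanSpace ℝ (Fin n))
    (hμC1 : ContDiffOn ℝ 1 μ U) (hμ0 : μ 0 = 0)
    (hμmin : ∀ x ∈ U, ∀ y : EuclideanSpace ℝ (Fin n), y ≠ μ x →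
      f (μ x) + g (x - μ x) < f y + g (x - y)) :
    (∃ V ∈ 𝓝 (0 : EuclideanSpace ℝ (Fin n)), ContDiffOn ℝ 2 (infConv f g) V) ∧
    ∃ W ∈ 𝓝 (0 : EuclideanSpace ℝ (Fin n)), ∀ x ∈ W,
      infConv f g x = f (μ x) + g (x - μ x) ∧
      fderiv ℝ (infConv f g) x = fderiv ℝ f (μ x) ∧
      fderiv ℝ (infConv f g) x = fderiv ℝ g (x - μ x) ∧
      (∀ u v : EuclideanSpace ℝ (Fin n),
        iteratedFDeriv ℝ 2 (infConv f g) x ![u, v] =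
          iteratedFDeriv ℝ 2 g (x - μ x) ![u, v - fderiv ℝ μ x v] ∧
        iteratedFDeriv ℝ 2 (infConv f g) x ![u, v] =
          iteratedFDeriv ℝ 2 f (μ x) ![u, fderiv ℝ μ x v]) := by
  obtain ⟨Vf, hVf, hf⟩ := hfC2
  obtain ⟨Vg, hVg, hg⟩ := hgC2
  have h0 : IsSmoothArgminAt f g μ 0 := by
    refine ⟨?_, ?_, ?_, hμC1.contDiffAt hU⟩
    · filter_upwards [hU] with x hx z
      rcases eq_or_ne z (μ x) with rfl | hz
      exacts [le_rfl, (hμmin x hx z hz).le]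
    · rw [hμ0]
      exact hf.contDiffAt hVf
    · rw [hμ0, sub_zero]
      exact hg.contDiffAt hVg
  refine ⟨⟨_, h0.eventually, fun x hx => hx.contDiffAt_infConv.contDiffWithinAt⟩,
    _, h0.eventually, fun x hx => ?_⟩
  have hDh := hx.hasFDerivAt_infConv.fderiv
  exact ⟨hx.infConv_eq, hDh, hDh.trans hx.fderiv_left_eq_fderiv_right, fun u v =>
    ⟨hx.iteratedFDeriv_infConv_two_right u v, hx.iteratedFDeriv_infConv_two_left u v⟩⟩

/-- Lemma 2.1(c) of the paper. With hypotheses as in Lemma 2.1 and a `C¹`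
selection `μ` of unique global minimizers of `σ_x`, the infimal convolution `h = f □ g`
is `C²` near `0` and satisfies `h x = f (μ x) + g (x - μ x)`,
`∇h x = ∇f (μ x) = ∇g (x - μ x)`, and
`Hess h|_x = Hess g|_{x-μ x} ∘ (Id - Dμ x) = Hess f|_{μ x} ∘ Dμ x` near `0`. -/
theorem stmt2 (n : ℕ) (hn : 1 ≤ n)
    (f g : EuclideanSpace ℝ (Fin n) → ℝ)
    (hfnn : ∀ x, 0 ≤ f x) (hgnn : ∀ x, 0 ≤ g x)
    (hfconv : ConvexOn ℝ Set.univ f) (hgconv : ConvexOn ℝ Set.univ g)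
    (hfC2 : ∃ V ∈ 𝓝 (0 : EuclideanSpace ℝ (Fin n)), ContDiffOn ℝ 2 f V)
    (hgC2 : ∃ V ∈ 𝓝 (0 : EuclideanSpace ℝ (Fin n)), ContDiffOn ℝ 2 g V)
    (hf0 : f 0 = 0) (hg0 : g 0 = 0)
    (hσpos : ∀ v : EuclideanSpace ℝ (Fin n), v ≠ 0 →
      0 < iteratedFDeriv ℝ 2 (fun y => f y + g (0 - y)) 0 ![v, v])
    (U : Set (EuclideanSpace ℝ (Fin n))) (hU : U ∈ 𝓝 (0 : EuclideanSpace ℝ (Fin n)))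
    (μ : EuclideanSpace ℝ (Fin n) → EuclideanSpace ℝ (Fin n))
    (hμC1 : ContDiffOn ℝ 1 μ U) (hμ0 : μ 0 = 0)
    (hμmin : ∀ x ∈ U, ∀ y : EuclideanSpace ℝ (Fin n), y ≠ μ x →
      f (μ x) + g (x - μ x) < f y + g (x - y)) :
    (∃ V ∈ 𝓝 (0 : EuclideanSpace ℝ (Fin n)), ContDiffOn ℝ 2 (infConv f g) V) ∧
    ∃ W ∈ 𝓝 (0 : EuclideanSpace ℝ (Fin n)), ∀ x ∈ W,
      infConv f g x = f (μ x) + g (x - μ x) ∧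
      fderiv ℝ (infConv f g) x = fderiv ℝ f (μ x) ∧
      fderiv ℝ (infConv f g) x = fderiv ℝ g (x - μ x) ∧
      (∀ u v : EuclideanSpace ℝ (Fin n),
        iteratedFDeriv ℝ 2 (infConv f g) x ![u, v] =
          iteratedFDeriv ℝ 2 g (x - μ x) ![u, v - fderiv ℝ μ x v] ∧
        iteratedFDeriv ℝ 2 (infConv f g) x ![u, v] =
          iteratedFDeriv ℝ 2 f (μ x) ![u, fderiv ℝ μ x v]) :=
  stmt2_general n f g hfC2 hgC2 U hU μ hμC1 hμ0 hμmin
end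
end

section
/- Let n ≥ 1. Let f, g : ℝⁿ → [0,∞) be convex functions that are C² on a neighborhood of 0 with f(0) = 0 = g(0); for x ∈ ℝⁿ let σ_x(y) = f(y) + g(x − y), and assume Hess σ₀|_{y=0} is positive definite. Let μ be C¹ on a neighborhood U of 0 with μ(0) = 0 and such that μ(x) is the unique global minimizer of σ_x for each x ∈ U, and let h = f □ g. If Hess h|_{x=0} is positive definite, then Hess f and Hess g are positive definite at every point of some neighborhood of 0, and the linear maps Dμ(x) and Id − Dμ(x) are invertible for all x in some neighborhood of 0. -/
open Set Filter Topology

noncomputable section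

/-!
Near `0` the infimal convolution equals `f (μ x) + g (x - μ x)`, whose derivative is
`Dg (x - μ x)` because of the first-order condition `Df (μ x) = Dg (x - μ x)`; hence `f □ g` is
`C²` at `0`. Taking `y = x` and `y = 0` in the infimum gives `f □ g ≤ f` and `f □ g ≤ g`, with
equality at `0`, so the Hessians of `f` and `g` at `0` dominate the positive definite Hessian of
`f □ g`, and by continuity they stay positive definite near `0`. Differentiating the first-order
condition gives `D²f (μ x) ∘ Dμ x = D²g (x - μ x) ∘ (I - Dμ x)`; evaluating on a kernel vector of
`Dμ x` or of `I - Dμ x` contradicts positive definiteness of one side.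
-/

section SecondOrder

variable {E : Type*} [NormedAddCommGroup E] [NormedSpace ℝ E]

theorem IsLocalMin.deriv_deriv_nonneg {q : ℝ → ℝ} {t : ℝ} (h : IsLocalMin q t)
    (hc : ContinuousAt q t) : 0 ≤ deriv (deriv q) t := by
  by_contra! hneg
  -- `q` would also have a local maximum at `t`, so it would be locally constant.
  have hconst : q =ᶠ[𝓝 t] fun _ => q t :=
    (h.and (isLocalMax_of_deriv_deriv_neg hneg h.deriv_eq_zero hc)).mono
      fun _ hs => le_antisymm hs.2 hs.1
  have := hconst.deriv.deriv_eq
  simp only [deriv_const'] at this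
  linarith

theorem IsLocalMin.iteratedFDeriv_two_nonneg {φ : E → ℝ} {x : E} (h : IsLocalMin φ x)
    (hφ : ContDiffAt ℝ 2 φ x) (v : E) : 0 ≤ iteratedFDeriv ℝ 2 φ x ![v, v] := by
  set line : ℝ → E := fun t => x + t • v
  have hline : ∀ t, HasDerivAt line v t := fun t =>
    (((hasDerivAt_id t).smul_const v).const_add x).congr_deriv (one_smul ℝ v)
  have hline0 : line 0 = x := by simp [line]
  have hlim : Tendsto line (𝓝 0) (𝓝 x) := hline0 ▸ (hline 0).continuousAt
  have hd : deriv (φ ∘ line) =ᶠ[𝓝 0] fun t => fderiv ℝ φ (line t) v := by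
    filter_upwards [hlim.eventually (hφ.eventually (by simp))] with t ht
    exact ((ht.differentiableAt (by simp)).hasFDerivAt.comp_hasDerivAt t (hline t)).deriv
  have hd' : HasDerivAt (fun t => fderiv ℝ φ (line t) v) (fderiv ℝ (fderiv ℝ φ) x v v) 0 := by
    have hD2 : HasFDerivAt (fderiv ℝ φ) (fderiv ℝ (fderiv ℝ φ) (line 0)) (line 0) := by
      rw [hline0]
      exact ((hφ.fderiv_right (m := 1) (by norm_num)).differentiableAt one_ne_zero).hasFDerivAt
    simpa [hline0] using (hD2.comp_hasDerivAt 0 (hline 0)).clm_apply (hasDerivAt_const 0 v)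
  have hmin : IsLocalMin (φ ∘ line) 0 := (hline0 ▸ h).comp_continuous (hline 0).continuousAt
  have := hmin.deriv_deriv_nonneg ((hline0 ▸ hφ.continuousAt).comp (hline 0).continuousAt)
  rw [hd.deriv_eq, hd'.deriv] at this
  simpa [iteratedFDeriv_two_apply] using this

theorem iteratedFDeriv_two_le_of_eventuallyLE {φ ψ : E → ℝ} {x : E} (hφ : ContDiffAt ℝ 2 φ x)
    (hψ : ContDiffAt ℝ 2 ψ x) (hle : φ ≤ᶠ[𝓝 x] ψ) (heq : φ x = ψ x) (v : E) :
    iteratedFDeriv ℝ 2 φ x ![v, v] ≤ iteratedFDeriv ℝ 2 ψ x ![v, v] := by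
  have hmin : IsLocalMin (ψ - φ) x := hle.mono fun y hy => by simp [heq, hy]
  have := hmin.iteratedFDeriv_two_nonneg (hψ.sub hφ) v
  rwa [iteratedFDeriv_sub_apply hψ hφ, sub_apply, sub_nonneg] at this

theorem ContinuousAt.eventually_pos_apply_diag {X : Type*} [TopologicalSpace X]
    [FiniteDimensional ℝ E] {A : X → E [×2]→L[ℝ] ℝ} {x : X} (hA : ContinuousAt A x)
    (hpos : ∀ v ≠ 0, 0 < A x ![v, v]) : ∀ᶠ y in 𝓝 x, ∀ v ≠ 0, 0 < A y ![v, v] := by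
  rcases subsingleton_or_nontrivial E with hE | hE
  · exact .of_forall fun _ v hv => absurd (Subsingleton.elim v 0) hv
  have hsphere : ∀ᶠ y in 𝓝 x, ∀ u ∈ Metric.sphere (0 : E) 1, 0 < A y ![u, u] :=
    (isCompact_sphere 0 1).eventually_forall_of_forall_eventually fun u hu =>
      ((hA.comp continuousAt_fst).eval (by fun_prop)).eventually
        (lt_mem_nhds (hpos u (Metric.ne_of_mem_sphere hu one_ne_zero)))
  filter_upwards [hsphere] with y hy v hv
  have hv' : ‖v‖ ≠ 0 := norm_ne_zero_iff.2 hv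
  have hu := hy (‖v‖⁻¹ • v) (by simp [norm_smul, hv'])
  have hscale : ![v, v] = fun i => ‖v‖ • ![‖v‖⁻¹ • v, ‖v‖⁻¹ • v] i := by
    ext i : 1
    fin_cases i <;> simp [smul_smul, hv']
  rw [hscale, (A y).map_smul_univ, smul_eq_mul]
  positivity

theorem eventually_iteratedFDeriv_two_pos_of_le [FiniteDimensional ℝ E] {φ ψ : E → ℝ} {x : E}
    (hφ : ContDiffAt ℝ 2 φ x) (hψ : ContDiffAt ℝ 2 ψ x) (hle : ψ ≤ᶠ[𝓝 x] φ) (heq : ψ x = φ x)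
    (hpos : ∀ v ≠ 0, 0 < iteratedFDeriv ℝ 2 ψ x ![v, v]) :
    ∀ᶠ y in 𝓝 x, ∀ v ≠ 0, 0 < iteratedFDeriv ℝ 2 φ y ![v, v] :=
  (hφ.continuousAt_iteratedFDeriv le_rfl).eventually_pos_apply_diag fun v hv =>
    (hpos v hv).trans_le (iteratedFDeriv_two_le_of_eventuallyLE hψ hφ hle heq v)

theorem injective_and_injective_id_sub_of_comp_eq {A B : E →L[ℝ] E →L[ℝ] ℝ} {P : E →L[ℝ] E}
    (hA : ∀ v ≠ 0, 0 < A v v) (hB : ∀ v ≠ 0, 0 < B v v)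
    (h : A ∘L P = B ∘L (ContinuousLinearMap.id ℝ E - P)) :
    Function.Injective P ∧ Function.Injective (ContinuousLinearMap.id ℝ E - P) := by
  have happly (w : E) : A (P w) w = B (w - P w) w := by simpa using congr($h w w)
  constructor
  · refine (injective_iff_map_eq_zero P).2 fun w hw => ?_
    by_contra hw0
    exact (hB w hw0).ne' (by simpa [hw] using (happly w).symm)
  · refine (injective_iff_map_eq_zero _).2 fun w hw => ?_
    have hPw : P w = w := (sub_eq_zero.1 hw).symm
    by_contra hw0
    exact (hA w hw0).ne' (by simpa [hPw] using happly w)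

end SecondOrder

section Envelope

variable {E : Type*} [NormedAddCommGroup E] [NormedSpace ℝ E] {f g : E → ℝ} {μ : E → E}

theorem IsLocalMin.fderiv_eq_fderiv_sub {x m : E} (h : IsLocalMin (fun y => f y + g (x - y)) m)
    (hf : DifferentiableAt ℝ f m) (hg : DifferentiableAt ℝ g (x - m)) :
    fderiv ℝ f m = fderiv ℝ g (x - m) := by
  have hd : HasFDerivAt (fun y => f y + g (x - y)) (fderiv ℝ f m - fderiv ℝ g (x - m)) m := by
    refine (hf.hasFDerivAt.add
      (hg.hasFDerivAt.comp m ((hasFDerivAt_id m).const_sub x))).congr_fderiv ?_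
    ext
    simp [sub_eq_add_neg]
  exact sub_eq_zero.1 (h.hasFDerivAt_eq_zero hd)

theorem hasFDerivAt_comp_add_comp_sub {x : E} (hμ : DifferentiableAt ℝ μ x)
    (hf : DifferentiableAt ℝ f (μ x)) (hg : DifferentiableAt ℝ g (x - μ x))
    (hfg : fderiv ℝ f (μ x) = fderiv ℝ g (x - μ x)) :
    HasFDerivAt (fun y => f (μ y) + g (y - μ y)) (fderiv ℝ g (x - μ x)) x := by
  refine ((hf.hasFDerivAt.comp x hμ.hasFDerivAt).add
    (hg.hasFDerivAt.comp x ((hasFDerivAt_id x).sub hμ.hasFDerivAt))).congr_fderiv ?_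
  ext
  simp [hfg]

theorem eventually_contDiffAt_comp_sub {x : E} (hμ : ContDiffAt ℝ 1 μ x)
    (hf : ContDiffAt ℝ 2 f (μ x)) (hg : ContDiffAt ℝ 2 g (x - μ x)) :
    ∀ᶠ y in 𝓝 x, ContDiffAt ℝ 1 μ y ∧ ContDiffAt ℝ 2 f (μ y) ∧ ContDiffAt ℝ 2 g (y - μ y) :=
  (hμ.eventually (by simp)).and <| (hμ.continuousAt.eventually (hf.eventually (by simp))).and <|
    (continuousAt_id.sub hμ.continuousAt).eventually (hg.eventually (by simp))

theorem contDiffAt_two_comp_add_comp_sub {x : E} (hμ : ContDiffAt ℝ 1 μ x)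
    (hf : ContDiffAt ℝ 2 f (μ x)) (hg : ContDiffAt ℝ 2 g (x - μ x))
    (hfg : ∀ᶠ y in 𝓝 x, fderiv ℝ f (μ y) = fderiv ℝ g (y - μ y)) :
    ContDiffAt ℝ 2 (fun y => f (μ y) + g (y - μ y)) x := by
  refine contDiffAt_succ_iff_hasFDerivAt (n := 1) |>.2 ⟨fun y => fderiv ℝ g (y - μ y), ?_, ?_⟩
  · refine ⟨_, (eventually_contDiffAt_comp_sub hμ hf hg).and hfg, ?_⟩
    rintro y ⟨⟨hμy, hfy, hgy⟩, hfgy⟩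
    exact hasFDerivAt_comp_add_comp_sub (hμy.differentiableAt one_ne_zero)
      (hfy.differentiableAt (by simp)) (hgy.differentiableAt (by simp)) hfgy
  · exact (hg.fderiv_right le_rfl).comp x (contDiffAt_id.sub hμ)

theorem bijective_fderiv_of_fderiv_comp_eq [FiniteDimensional ℝ E] {x : E}
    (hμ : ContDiffAt ℝ 1 μ x) (hf : ContDiffAt ℝ 2 f (μ x)) (hg : ContDiffAt ℝ 2 g (x - μ x))
    (hfg : (fun y => fderiv ℝ f (μ y)) =ᶠ[𝓝 x] fun y => fderiv ℝ g (y - μ y))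
    (hfpos : ∀ v ≠ 0, 0 < iteratedFDeriv ℝ 2 f (μ x) ![v, v])
    (hgpos : ∀ v ≠ 0, 0 < iteratedFDeriv ℝ 2 g (x - μ x) ![v, v]) :
    Function.Bijective (fderiv ℝ μ x) ∧
      Function.Bijective (⇑(ContinuousLinearMap.id ℝ E - fderiv ℝ μ x)) := by
  have hDμ := (hμ.differentiableAt one_ne_zero).hasFDerivAt
  have hDf := ((hf.fderiv_right (m := 1) (by norm_num)).differentiableAt one_ne_zero).hasFDerivAt
  have hDg := ((hg.fderiv_right (m := 1) (by norm_num)).differentiableAt one_ne_zero).hasFDerivAt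
  have hcomp : fderiv ℝ (fderiv ℝ f) (μ x) ∘L fderiv ℝ μ x =
      fderiv ℝ (fderiv ℝ g) (x - μ x) ∘L (ContinuousLinearMap.id ℝ E - fderiv ℝ μ x) := by
    rw [← (hDf.comp x hDμ).fderiv, ← (hDg.comp x ((hasFDerivAt_id x).sub hDμ)).fderiv]
    exact hfg.fderiv_eq
  simp only [iteratedFDeriv_two_apply] at hfpos hgpos
  obtain ⟨hinj, hinj'⟩ := injective_and_injective_id_sub_of_comp_eq (by simpa using hfpos)
    (by simpa using hgpos) hcomp
  exact ⟨⟨hinj, LinearMap.injective_iff_surjective.1 hinj⟩,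
    ⟨hinj', LinearMap.injective_iff_surjective.1 hinj'⟩⟩

end Envelope

section InfConv

variable {E : Type*} [NormedAddCommGroup E] {f g : E → ℝ} {μ : E → E} {U : Set E}

def IsInfConvMinimizerOn (f g : E → ℝ) (μ : E → E) (U : Set E) : Prop :=
  ∀ x ∈ U, ∀ y, f (μ x) + g (x - μ x) ≤ f y + g (x - y)

namespace IsInfConvMinimizerOn

variable {x : E}

theorem infConv_eq (h : IsInfConvMinimizerOn f g μ U) (hx : x ∈ U) :
    infConv f g x = f (μ x) + g (x - μ x) :=
  le_antisymm (ciInf_le ⟨_, forall_mem_range.2 (h x hx)⟩ (μ x)) (le_ciInf (h x hx))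

theorem infConv_le_left (h : IsInfConvMinimizerOn f g μ U) (hx : x ∈ U) (hg : g 0 = 0) :
    infConv f g x ≤ f x := by
  simpa [h.infConv_eq hx, hg] using h x hx x

theorem infConv_le_right (h : IsInfConvMinimizerOn f g μ U) (hx : x ∈ U) (hf : f 0 = 0) :
    infConv f g x ≤ g x := by
  simpa [h.infConv_eq hx, hf] using h x hx 0

variable [NormedSpace ℝ E] {x₀ : E}

theorem eventually_fderiv_eq (h : IsInfConvMinimizerOn f g μ U) (hU : U ∈ 𝓝 x₀)
    (hμ : ContDiffAt ℝ 1 μ x₀) (hf : ContDiffAt ℝ 2 f (μ x₀)) (hg : ContDiffAt ℝ 2 g (x₀ - μ x₀)) :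
    ∀ᶠ x in 𝓝 x₀, fderiv ℝ f (μ x) = fderiv ℝ g (x - μ x) := by
  filter_upwards [eventually_contDiffAt_comp_sub hμ hf hg, hU] with x ⟨_, hfx, hgx⟩ hx
  exact IsLocalMin.fderiv_eq_fderiv_sub (.of_forall (h x hx))
    (hfx.differentiableAt (by simp)) (hgx.differentiableAt (by simp))

theorem contDiffAt_infConv (h : IsInfConvMinimizerOn f g μ U) (hU : U ∈ 𝓝 x₀)
    (hμ : ContDiffAt ℝ 1 μ x₀) (hf : ContDiffAt ℝ 2 f (μ x₀)) (hg : ContDiffAt ℝ 2 g (x₀ - μ x₀)) :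
    ContDiffAt ℝ 2 (infConv f g) x₀ :=
  have hfg := h.eventually_fderiv_eq hU hμ hf hg
  (contDiffAt_two_comp_add_comp_sub hμ hf hg hfg).congr_of_eventuallyEq
    (eventually_of_mem hU fun _ hx => h.infConv_eq hx)

end IsInfConvMinimizerOn

end InfConv

theorem stmt3_general (n : ℕ)
    (f g : EuclideanSpace ℝ (Fin n) → ℝ)
    (hfC2 : ∃ V ∈ 𝓝 (0 : EuclideanSpace ℝ (Fin n)), ContDiffOn ℝ 2 f V)
    (hgC2 : ∃ V ∈ 𝓝 (0 : EuclideanSpace ℝ (Fin n)), ContDiffOn ℝ 2 g V)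
    (hf0 : f 0 = 0) (hg0 : g 0 = 0)
    (U : Set (EuclideanSpace ℝ (Fin n))) (hU : U ∈ 𝓝 (0 : EuclideanSpace ℝ (Fin n)))
    (μ : EuclideanSpace ℝ (Fin n) → EuclideanSpace ℝ (Fin n))
    (hμC1 : ContDiffOn ℝ 1 μ U) (hμ0 : μ 0 = 0)
    (hμmin : ∀ x ∈ U, ∀ y : EuclideanSpace ℝ (Fin n), y ≠ μ x →
      f (μ x) + g (x - μ x) < f y + g (x - y))
    (hhpos : ∀ v : EuclideanSpace ℝ (Fin n), v ≠ 0 →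
      0 < iteratedFDeriv ℝ 2 (infConv f g) 0 ![v, v]) :
    ∃ V ∈ 𝓝 (0 : EuclideanSpace ℝ (Fin n)), ∀ x ∈ V,
      (∀ v : EuclideanSpace ℝ (Fin n), v ≠ 0 → 0 < iteratedFDeriv ℝ 2 f x ![v, v]) ∧
      (∀ v : EuclideanSpace ℝ (Fin n), v ≠ 0 → 0 < iteratedFDeriv ℝ 2 g x ![v, v]) ∧
      Function.Bijective (fderiv ℝ μ x) ∧
      Function.Bijective (⇑(ContinuousLinearMap.id ℝ (EuclideanSpace ℝ (Fin n)) - fderiv ℝ μ x)) := by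
  obtain ⟨Vf, hVf, hf⟩ := hfC2
  obtain ⟨Vg, hVg, hg⟩ := hgC2
  have hf₂ : ContDiffAt ℝ 2 f 0 := hf.contDiffAt hVf
  have hg₂ : ContDiffAt ℝ 2 g 0 := hg.contDiffAt hVg
  have hμ₁ : ContDiffAt ℝ 1 μ 0 := hμC1.contDiffAt hU
  have hfμ : ContDiffAt ℝ 2 f (μ 0) := by rwa [hμ0]
  have hgμ : ContDiffAt ℝ 2 g (0 - μ 0) := by rwa [hμ0, sub_zero]
  have hmin : IsInfConvMinimizerOn f g μ U := fun x hx y => by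
    rcases eq_or_ne y (μ x) with rfl | hy
    exacts [le_rfl, (hμmin x hx y hy).le]
  have hh₂ := hmin.contDiffAt_infConv hU hμ₁ hfμ hgμ
  have hh0 : infConv f g 0 = 0 := by simp [hmin.infConv_eq (mem_of_mem_nhds hU), hμ0, hf0, hg0]
  have hfpos := eventually_iteratedFDeriv_two_pos_of_le hf₂ hh₂
    (eventually_of_mem hU fun _ hx => hmin.infConv_le_left hx hg0) (by rw [hh0, hf0]) hhpos
  have hgpos := eventually_iteratedFDeriv_two_pos_of_le hg₂ hh₂
    (eventually_of_mem hU fun _ hx => hmin.infConv_le_right hx hf0) (by rw [hh0, hg0]) hhpos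
  have hμlim : Tendsto μ (𝓝 0) (𝓝 0) := by simpa [hμ0] using hμ₁.continuousAt.tendsto
  have hsublim : Tendsto (fun x => x - μ x) (𝓝 0) (𝓝 0) := by simpa using tendsto_id.sub hμlim
  refine ⟨_, hfpos.and (hgpos.and ?_), fun x hx => hx⟩
  filter_upwards [eventually_contDiffAt_comp_sub hμ₁ hfμ hgμ,
    (hmin.eventually_fderiv_eq hU hμ₁ hfμ hgμ).eventually_nhds,
    hμlim.eventually hfpos, hsublim.eventually hgpos] with x ⟨hμx, hfx, hgx⟩ hfgx hfposx hgposx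
  exact bijective_fderiv_of_fderiv_comp_eq hμx hfx hgx hfgx hfposx hgposx

/-- Lemma 2.1(d) of the paper. If moreover `Hess (f □ g)` at `0` is positive
definite, then `Hess f` and `Hess g` are positive definite at every point near `0`, and
`Dμ x` and `Id - Dμ x` are invertible for all `x` near `0`. -/
theorem stmt3 (n : ℕ) (hn : 1 ≤ n)
    (f g : EuclideanSpace ℝ (Fin n) → ℝ)
    (hfnn : ∀ x, 0 ≤ f x) (hgnn : ∀ x, 0 ≤ g x)
    (hfconv : ConvexOn ℝ Set.univ f) (hgconv : ConvexOn ℝ Set.univ g)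
    (hfC2 : ∃ V ∈ 𝓝 (0 : EuclideanSpace ℝ (Fin n)), ContDiffOn ℝ 2 f V)
    (hgC2 : ∃ V ∈ 𝓝 (0 : EuclideanSpace ℝ (Fin n)), ContDiffOn ℝ 2 g V)
    (hf0 : f 0 = 0) (hg0 : g 0 = 0)
    (hσpos : ∀ v : EuclideanSpace ℝ (Fin n), v ≠ 0 →
      0 < iteratedFDeriv ℝ 2 (fun y => f y + g (0 - y)) 0 ![v, v])
    (U : Set (EuclideanSpace ℝ (Fin n))) (hU : U ∈ 𝓝 (0 : EuclideanSpace ℝ (Fin n)))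
    (μ : EuclideanSpace ℝ (Fin n) → EuclideanSpace ℝ (Fin n))
    (hμC1 : ContDiffOn ℝ 1 μ U) (hμ0 : μ 0 = 0)
    (hμmin : ∀ x ∈ U, ∀ y : EuclideanSpace ℝ (Fin n), y ≠ μ x →
      f (μ x) + g (x - μ x) < f y + g (x - y))
    (hhpos : ∀ v : EuclideanSpace ℝ (Fin n), v ≠ 0 →
      0 < iteratedFDeriv ℝ 2 (infConv f g) 0 ![v, v]) :
    ∃ V ∈ 𝓝 (0 : EuclideanSpace ℝ (Fin n)), ∀ x ∈ V,
      (∀ v : EuclideanSpace ℝ (Fin n), v ≠ 0 → 0 < iteratedFDeriv ℝ 2 f x ![v, v]) ∧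
      (∀ v : EuclideanSpace ℝ (Fin n), v ≠ 0 → 0 < iteratedFDeriv ℝ 2 g x ![v, v]) ∧
      Function.Bijective (fderiv ℝ μ x) ∧
      Function.Bijective (⇑(ContinuousLinearMap.id ℝ (EuclideanSpace ℝ (Fin n)) - fderiv ℝ μ x)) :=
  stmt3_general n f g hfC2 hgC2 hf0 hg0 U hU μ hμC1 hμ0 hμmin hhpos
end
end

section
/- Let n ≥ 1, let k ≥ 2 be an integer and α ∈ [0,1]. Let f, g : ℝⁿ → [0,∞) be convex functions that are C² on a neighborhood of 0 with f(0) = 0 = g(0), and let h = f □ g. If Hess f|_{x=0} is positive definite and both f and h are C^{k,α} near 0, then g is C^{k,α} near 0. -/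
open Set Filter Topology

noncomputable section

/-- `f` is `C^{k,α}` near `x₀`: on some open neighborhood of `x₀` it is `C^k` and its
`k`-th derivative is `α`-Hölder continuous there. -/
def CkAlphaNear {E F : Type*} [NormedAddCommGroup E] [NormedSpace ℝ E]
    [NormedAddCommGroup F] [NormedSpace ℝ F]
    (k : ℕ) (α : ℝ) (f : E → F) (x₀ : E) : Prop :=
  ∃ U : Set E, IsOpen U ∧ x₀ ∈ U ∧ ContDiffOn ℝ k f U ∧
    ∃ C : ℝ, ∀ y ∈ U, ∀ z ∈ U,
      ‖iteratedFDeriv ℝ k f y - iteratedFDeriv ℝ k f z‖ ≤ C * ‖y - z‖ ^ α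

/-! Write `h = f □ g`. If `∇f y = ∇g w`, the supporting hyperplanes of `f` at `y` and of `g` at `w`
show that the infimum defining `h (y + w)` is attained at `y`, and then `∇h (y + w) = ∇g w`. Since
`Hess f|₀` is invertible, `∇f` has a `C^{k-1,α}` local inverse `N` near `∇f 0 = 0 = ∇g 0`; with
`T w = N (∇g w) + w` this gives `∇h ∘ T = ∇g` near `0`. Now `x ↦ x - N (∇h x)` is `C^{k-1,α}` and
a left inverse of `T`, so by the inverse function theorem in Hölder classes `T` is `C^{k-1,α}`,
hence so is `∇g = ∇h ∘ T`, i.e. `g` is `C^{k,α}`. -/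

open Asymptotics

section CkAlphaNear

variable {E F G : Type*} [NormedAddCommGroup E] [NormedAddCommGroup F] [NormedAddCommGroup G]
  {k : ℕ} {α : ℝ} {φ ψ : E → F} {a : E}

/-- `α`-Hölder continuity on some neighbourhood of `a`, in a two-point form along `𝓝 (a, a)` to
which Mathlib's estimates for `taylorComp` apply directly. -/
def HolderNear (α : ℝ) (φ : E → F) (a : E) : Prop :=
  (fun p : E × E => φ p.1 - φ p.2) =O[𝓝 (a, a)] fun p => ‖p.1 - p.2‖ ^ α

theorem HolderNear.congr_of_eventuallyEq (h : HolderNear α φ a) (hφψ : φ =ᶠ[𝓝 a] ψ) :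
    HolderNear α ψ a := by
  refine EventuallyEq.trans_isBigO ?_ h
  filter_upwards [hφψ.comp_tendsto (continuousAt_fst (p := (a, a))),
    hφψ.comp_tendsto (continuousAt_snd (p := (a, a)))] with p h₁ h₂
  simp only [Function.comp_apply] at h₁ h₂
  rw [h₁, h₂]

theorem HolderNear.sub (hφ : HolderNear α φ a) (hψ : HolderNear α ψ a) :
    HolderNear α (fun x => φ x - ψ x) a :=
  (IsBigO.sub hφ hψ).congr_left fun _ => sub_sub_sub_comm _ _ _ _

theorem isBigO_sub_rpow_norm_sub (hα : α ≤ 1) (a : E) :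
    (fun p : E × E => p.1 - p.2) =O[𝓝 (a, a)] fun p => ‖p.1 - p.2‖ ^ α := by
  have hd : Tendsto (fun p : E × E => ‖p.1 - p.2‖) (𝓝 (a, a)) (𝓝[≥] 0) := by
    refine tendsto_nhdsWithin_iff.2 ⟨?_, .of_forall fun p => norm_nonneg _⟩
    simpa using ((continuous_fst.sub continuous_snd).norm.tendsto (a, a))
  exact ((IsBigO.id_rpow_of_le_one hα).comp_tendsto hd).of_norm_left

theorem HasStrictFDerivAt.comp_holderNear [NormedSpace ℝ F] [NormedSpace ℝ G] {g : F → G}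
    {g' : F →L[ℝ] G} (hg : HasStrictFDerivAt g g' (φ a)) (hφ : HolderNear α φ a)
    (hφc : ContinuousAt φ a) : HolderNear α (g ∘ φ) a :=
  (hg.isBigO_sub.comp_tendsto (ContinuousAt.prodMap (p := (a, a)) hφc hφc)).trans hφ

theorem ContinuousAt.isBoundedUnder_norm_comp_fst {u : E → F} (hu : ContinuousAt u a) :
    (𝓝 (a, a)).IsBoundedUnder (· ≤ ·) fun p : E × E => ‖u p.1‖ :=
  (hu.comp continuousAt_fst).norm.tendsto.isBoundedUnder_le

theorem ContinuousAt.isBoundedUnder_norm_comp_snd {u : E → F} (hu : ContinuousAt u a) :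
    (𝓝 (a, a)).IsBoundedUnder (· ≤ ·) fun p : E × E => ‖u p.2‖ :=
  (hu.comp continuousAt_snd).norm.tendsto.isBoundedUnder_le

theorem LinearIsometryEquiv.holderNear_comp_iff [NormedSpace ℝ F] [NormedSpace ℝ G]
    (e : F ≃ₗᵢ[ℝ] G) : HolderNear α (e ∘ φ) a ↔ HolderNear α φ a := by
  simp only [HolderNear, Function.comp_apply]
  rw [← isBigO_norm_left]
  simp only [← dist_eq_norm_sub, LinearIsometryEquiv.dist_map]
  simp only [dist_eq_norm_sub, isBigO_norm_left]

variable [NormedSpace ℝ E] [NormedSpace ℝ F]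

theorem ckAlphaNear_iff :
    CkAlphaNear k α φ a ↔
      ContDiffAt ℝ k φ a ∧ HolderNear α (iteratedFDeriv ℝ k φ) a := by
  constructor
  · rintro ⟨U, hUo, haU, hφU, C, hC⟩
    refine ⟨hφU.contDiffAt (hUo.mem_nhds haU), IsBigO.of_bound C ?_⟩
    filter_upwards [prod_mem_nhds (hUo.mem_nhds haU) (hUo.mem_nhds haU)] with p hp
    rw [Real.norm_of_nonneg (by positivity)]
    exact hC _ hp.1 _ hp.2
  · rintro ⟨hφ, hH⟩
    obtain ⟨C, hC⟩ := hH.bound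
    obtain ⟨V, hV, W, hW, hVW⟩ := mem_nhds_prod_iff.1 hC
    obtain ⟨U, hU, hUo, haU⟩ :=
      mem_nhds_iff.1 (inter_mem (inter_mem hV hW) (hφ.eventually (by simp)))
    refine ⟨U, hUo, haU, fun x hx => ContDiffAt.contDiffWithinAt (by simpa using (hU hx).2), C,
      fun y hy z hz => ?_⟩
    have := hVW (mk_mem_prod (hU hy).1.1 (hU hz).1.2)
    rwa [mem_ofPred_eq, Real.norm_of_nonneg (by positivity)] at this

theorem HasStrictFDerivAt.holderNear {φ' : E →L[ℝ] F} (hφ : HasStrictFDerivAt φ φ' a)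
    (hα : α ≤ 1) : HolderNear α φ a :=
  hφ.isBigO_sub.trans (isBigO_sub_rpow_norm_sub hα a)

theorem HolderNear.comp_hasStrictFDerivAt {g : F → G} {φ' : E →L[ℝ] F}
    (hg : HolderNear α g (φ a)) (hφ : HasStrictFDerivAt φ φ' a) (hα : 0 ≤ α) :
    HolderNear α (g ∘ φ) a :=
  (hg.comp_tendsto
    (ContinuousAt.prodMap (p := (a, a)) hφ.continuousAt hφ.continuousAt)).trans <|
    hφ.isBigO_sub.norm_norm.rpow hα (.of_forall fun _ => norm_nonneg _)

theorem ContDiffAt.holderNear_iteratedFDeriv {i : ℕ} (h : ContDiffAt ℝ (i + 1) φ a)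
    (hα : α ≤ 1) : HolderNear α (iteratedFDeriv ℝ i φ) a :=
  ((h.iteratedFDeriv_right (m := 1) (add_comm _ _).le).hasStrictFDerivAt one_ne_zero).holderNear hα

theorem CkAlphaNear.contDiffAt (h : CkAlphaNear k α φ a) : ContDiffAt ℝ k φ a :=
  (ckAlphaNear_iff.1 h).1

theorem CkAlphaNear.holderNear_iteratedFDeriv (h : CkAlphaNear k α φ a) (hα : α ≤ 1) {i : ℕ}
    (hi : i ≤ k) : HolderNear α (iteratedFDeriv ℝ i φ) a := by
  rcases hi.lt_or_eq with hi | rfl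
  · exact (h.contDiffAt.of_le (by exact_mod_cast hi)).holderNear_iteratedFDeriv hα
  · exact (ckAlphaNear_iff.1 h).2

theorem ContDiffAt.ckAlphaNear (h : ContDiffAt ℝ (k + 1) φ a) (hα : α ≤ 1) :
    CkAlphaNear k α φ a :=
  ckAlphaNear_iff.2 ⟨h.of_le (by exact_mod_cast k.le_succ), h.holderNear_iteratedFDeriv hα⟩

theorem CkAlphaNear.congr_of_eventuallyEq (h : CkAlphaNear k α φ a) (hφψ : φ =ᶠ[𝓝 a] ψ) :
    CkAlphaNear k α ψ a :=
  ckAlphaNear_iff.2 ⟨h.contDiffAt.congr_of_eventuallyEq hφψ.symm,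
    (ckAlphaNear_iff.1 h).2.congr_of_eventuallyEq (hφψ.iteratedFDeriv ℝ k)⟩

theorem CkAlphaNear.sub (hφ : CkAlphaNear k α φ a) (hψ : CkAlphaNear k α ψ a) :
    CkAlphaNear k α (fun x => φ x - ψ x) a := by
  refine ckAlphaNear_iff.2 ⟨hφ.contDiffAt.sub hψ.contDiffAt, ?_⟩
  refine ((ckAlphaNear_iff.1 hφ).2.sub (ckAlphaNear_iff.1 hψ).2).congr_of_eventuallyEq ?_
  filter_upwards [hφ.contDiffAt.eventually (by simp), hψ.contDiffAt.eventually (by simp)]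
    with x hφx hψx
  exact (fun_iteratedFDeriv_sub_apply hφx hψx).symm

theorem CkAlphaNear.holderNear (h : CkAlphaNear k α φ a) (hα : α ≤ 1) :
    HolderNear α φ a := by
  simpa [iteratedFDeriv_zero_eq_comp, LinearIsometryEquiv.holderNear_comp_iff]
    using h.holderNear_iteratedFDeriv hα k.zero_le

theorem holderNear_iteratedFDeriv_succ_iff :
    HolderNear α (iteratedFDeriv ℝ (k + 1) φ) a ↔
      HolderNear α (iteratedFDeriv ℝ k (fderiv ℝ φ)) a := by
  have : iteratedFDeriv ℝ (k + 1) φ = _ ∘ iteratedFDeriv ℝ k (fderiv ℝ φ) :=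
    funext fun _ => iteratedFDeriv_succ_eq_comp_right
  rw [this, LinearIsometryEquiv.holderNear_comp_iff]

theorem ckAlphaNear_succ_iff :
    CkAlphaNear (k + 1) α φ a ↔
      (∀ᶠ x in 𝓝 a, DifferentiableAt ℝ φ x) ∧ CkAlphaNear k α (fderiv ℝ φ) a := by
  rw [ckAlphaNear_iff, ckAlphaNear_iff, holderNear_iteratedFDeriv_succ_iff, ← and_assoc]
  refine and_congr_left fun _ => ⟨fun h => ⟨?_, ?_⟩, fun ⟨hd, h⟩ => ?_⟩
  · exact (h.eventually (by simp)).mono fun x hx => hx.differentiableAt (by simp)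
  · exact h.fderiv_right_succ
  · exact contDiffAt_succ_iff_hasFDerivAt.2
      ⟨fderiv ℝ φ, ⟨_, hd, fun x hx => hx.hasFDerivAt⟩, h⟩

variable [NormedSpace ℝ G]

theorem CkAlphaNear.comp_of_holderNear {g : F → G} (hg : ContDiffAt ℝ k g (φ a))
    (hφ : CkAlphaNear k α φ a) (hα : α ≤ 1)
    (hgφ : ∀ i ≤ k, HolderNear α (fun x => iteratedFDeriv ℝ i g (φ x)) a) :
    CkAlphaNear k α (g ∘ φ) a := by
  refine ckAlphaNear_iff.2 ⟨hg.comp a hφ.contDiffAt, ?_⟩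
  have hφc := hφ.contDiffAt.continuousAt
  have hfaa : HolderNear α
      (fun x => (ftaylorSeries ℝ g (φ x)).taylorComp (ftaylorSeries ℝ φ x) k) a :=
    FormalMultilinearSeries.taylorComp_sub_taylorComp_isBigO
      (fun i hi => ((hg.continuousAt_iteratedFDeriv (by exact_mod_cast hi)).comp
        hφc).isBoundedUnder_norm_comp_fst) hgφ
      (fun i hi => (hφ.contDiffAt.continuousAt_iteratedFDeriv
        (by exact_mod_cast hi)).isBoundedUnder_norm_comp_fst)
      (fun i hi => (hφ.contDiffAt.continuousAt_iteratedFDeriv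
        (by exact_mod_cast hi)).isBoundedUnder_norm_comp_snd)
      (fun i hi => hφ.holderNear_iteratedFDeriv hα hi)
  refine hfaa.congr_of_eventuallyEq ?_
  filter_upwards [hφ.contDiffAt.eventually (by simp),
    hφc.eventually (hg.eventually (by simp))] with x hφx hgx
  exact (iteratedFDeriv_comp hgx hφx le_rfl).symm

theorem CkAlphaNear.comp_hasStrictFDerivAt {g : F → G} {φ' : E →L[ℝ] F}
    (hg : CkAlphaNear k α g (φ a)) (hφ : CkAlphaNear k α φ a)
    (hφ' : HasStrictFDerivAt φ φ' a)
    (hα0 : 0 ≤ α) (hα1 : α ≤ 1) : CkAlphaNear k α (g ∘ φ) a :=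
  hφ.comp_of_holderNear hg.contDiffAt hα1 fun _ hi =>
    (hg.holderNear_iteratedFDeriv hα1 hi).comp_hasStrictFDerivAt hφ' hα0

theorem CkAlphaNear.comp {g : F → G} (hg : CkAlphaNear k α g (φ a))
    (hφ : CkAlphaNear k α φ a) (hk : k ≠ 0) (hα0 : 0 ≤ α) (hα1 : α ≤ 1) :
    CkAlphaNear k α (g ∘ φ) a :=
  hg.comp_hasStrictFDerivAt hφ (hφ.contDiffAt.hasStrictFDerivAt (by exact_mod_cast hk)) hα0 hα1

theorem ContDiffAt.comp_ckAlphaNear {g : F → G} (hg : ContDiffAt ℝ (k + 1) g (φ a))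
    (hφ : CkAlphaNear k α φ a) (hα : α ≤ 1) : CkAlphaNear k α (g ∘ φ) a :=
  hφ.comp_of_holderNear (hg.of_le (by exact_mod_cast k.le_succ)) hα fun i hi =>
    ((hg.iteratedFDeriv_right (m := 1) (i := i) (by norm_cast; omega)).hasStrictFDerivAt
      one_ne_zero).comp_holderNear (hφ.holderNear hα) hφ.contDiffAt.continuousAt

theorem eventually_fderiv_eq_inverse {Z : E → F} {W : F → E} {b : F} (hWc : ContinuousAt W b)
    (hZ : ∀ᶠ x in 𝓝 (W b), DifferentiableAt ℝ Z x)
    (hW : ∀ᶠ y in 𝓝 b, DifferentiableAt ℝ W y)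
    (hWZ : ∀ᶠ x in 𝓝 (W b), W (Z x) = x) (hZW : ∀ᶠ y in 𝓝 b, Z (W y) = y) :
    ∀ᶠ y in 𝓝 b, fderiv ℝ W y = (fderiv ℝ Z (W y)).inverse := by
  filter_upwards [hW, hZW, hZW.eventually_nhds, hWc.tendsto.eventually hZ,
    hWc.tendsto.eventually hWZ.eventually_nhds] with y hWy hZWy hZW' hZy hWZ'
  have hWy' : DifferentiableAt ℝ W (Z (W y)) := hZWy.symm ▸ hWy
  refine (ContinuousLinearMap.inverse_eq ?_ ?_).symm
  · have hid : Z ∘ W =ᶠ[𝓝 y] id := hZW'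
    rw [← fderiv_comp y hZy hWy, hid.fderiv_eq, fderiv_id]
  · have hid : W ∘ Z =ᶠ[𝓝 (W y)] id := hWZ'
    have h := fderiv_comp (W y) hWy' hZy
    rw [hZWy] at h
    rw [← h, hid.fderiv_eq, fderiv_id]

theorem HasStrictFDerivAt.ckAlphaNear_localInverse [CompleteSpace E] {Z : E → F}
    {A : E ≃L[ℝ] F} (hZ' : HasStrictFDerivAt Z (A : E →L[ℝ] F) a)
    (hZ : CkAlphaNear k α Z a)
    (hk : k ≠ 0) (hα0 : 0 ≤ α) (hα1 : α ≤ 1) :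
    CkAlphaNear k α (hZ'.localInverse Z A a) (Z a) := by
  obtain ⟨m, rfl⟩ : ∃ m, k = m + 1 := ⟨k - 1, by omega⟩
  -- No induction on `k`: `W` is already `C^(m+1)`, hence `C^{m,α}`, and `DW = (DZ ∘ W)⁻¹`.
  set W := hZ'.localInverse Z A a
  have hW : ContDiffAt ℝ (m + 1) W (Z a) :=
    hZ.contDiffAt.to_localInverse hZ'.hasFDerivAt (by simp)
  have hWa : W (Z a) = a := hZ'.localInverse_apply_image
  have hZW : CkAlphaNear m α (fderiv ℝ Z ∘ W) (Z a) := by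
    refine .comp_hasStrictFDerivAt ?_ (hW.ckAlphaNear hα1) hZ'.to_localInverse hα0 hα1
    rw [hWa]
    exact (ckAlphaNear_succ_iff.1 hZ).2
  have hinv : ContDiffAt ℝ (m + 1) ContinuousLinearMap.inverse ((fderiv ℝ Z ∘ W) (Z a)) := by
    rw [Function.comp_apply, hWa, hZ'.hasFDerivAt.fderiv]
    exact contDiffAt_map_inverse A
  have hZd : ∀ᶠ x in 𝓝 (W (Z a)), DifferentiableAt ℝ Z x := by
    rw [hWa]
    exact (ckAlphaNear_succ_iff.1 hZ).1
  have hWZ : ∀ᶠ x in 𝓝 (W (Z a)), W (Z x) = x := by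
    rw [hWa]
    exact hZ'.eventually_left_inverse
  refine ckAlphaNear_succ_iff.2 ⟨(hW.eventually (by simp)).mono fun y hy =>
    hy.differentiableAt (by simp), (hinv.comp_ckAlphaNear hZW hα1).congr_of_eventuallyEq ?_⟩
  filter_upwards [eventually_fderiv_eq_inverse hW.continuousAt hZd
    ((hW.eventually (by simp)).mono fun y hy => hy.differentiableAt (by simp)) hWZ
    hZ'.eventually_right_inverse] with y hy
  exact hy.symm

theorem CkAlphaNear.of_eventually_leftInverse [FiniteDimensional ℝ E] {z T : E → E}
    (hz : CkAlphaNear k α z (T a)) (hk : k ≠ 0) (hα0 : 0 ≤ α) (hα1 : α ≤ 1)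
    (hT : DifferentiableAt ℝ T a) (hzT : ∀ᶠ w in 𝓝 a, z (T w) = w) :
    CkAlphaNear k α T a := by
  have hzs := hz.contDiffAt.hasStrictFDerivAt (by exact_mod_cast hk)
  have hid : z ∘ T =ᶠ[𝓝 a] id := hzT
  have hcomp : (fderiv ℝ z (T a)).comp (fderiv ℝ T a) = .id ℝ E := by
    rw [← fderiv_comp a hzs.differentiableAt hT, hid.fderiv_eq, fderiv_id]
  have hcomp' : (fderiv ℝ T a).comp (fderiv ℝ z (T a)) = .id ℝ E :=
    ContinuousLinearMap.coe_injective <|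
      (LinearMap.comp_eq_id_comm ℝ E).1 (congrArg ContinuousLinearMap.toLinearMap hcomp)
  obtain ⟨A, hA⟩ := ContinuousLinearMap.IsInvertible.of_inverse hcomp hcomp'
  rw [← hA] at hzs
  have hW := hzs.ckAlphaNear_localInverse hz hk hα0 hα1
  rw [hzT.self_of_nhds] at hW
  refine hW.congr_of_eventuallyEq ?_
  filter_upwards [hT.continuousAt.tendsto.eventually hzs.eventually_left_inverse, hzT]
    with w hw hzw
  rw [← hw, hzw]

end CkAlphaNear

section InfConv

variable {E : Type*} [NormedAddCommGroup E] {f g : E → ℝ}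

theorem infConv_add_le (hf : BddBelow (range f)) (hg : BddBelow (range g)) (y w : E) :
    infConv f g (y + w) ≤ f y + g w := by
  obtain ⟨b, hb⟩ := hf
  obtain ⟨c, hc⟩ := hg
  have hbdd : BddBelow (range fun u => f u + g (y + w - u)) :=
    ⟨b + c, forall_mem_range.2 fun u =>
      add_le_add (hb (mem_range_self u)) (hc (mem_range_self _))⟩
  have := ciInf_le hbdd y
  rwa [add_sub_cancel_left] at this

variable [NormedSpace ℝ E]

theorem ConvexOn.add_le_of_hasFDerivAt {f' : E →L[ℝ] ℝ} {y : E} (hf : ConvexOn ℝ univ f)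
    (hd : HasFDerivAt f f' y) (u : E) : f y + f' (u - y) ≤ f u := by
  set ℓ : ℝ →ᵃ[ℝ] E := AffineMap.lineMap y u
  have hconv : ConvexOn ℝ univ (f ∘ ℓ) := by simpa using hf.comp_affineMap ℓ
  have hderiv : HasDerivAt (f ∘ ℓ) (f' (u - y)) 0 := by
    have hd' : HasFDerivAt f f' (ℓ 0) := by simpa [ℓ] using hd
    exact hd'.comp_hasDerivAt 0 AffineMap.hasDerivAt_lineMap
  have := hconv.le_slope_of_hasDerivAt (mem_univ 0) (mem_univ 1) one_pos hderiv
  simp only [slope_def_field, Function.comp_apply, ℓ, AffineMap.lineMap_apply_one,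
    AffineMap.lineMap_apply_zero, sub_zero, div_one] at this
  linarith

theorem infConv_add_eq_of_hasFDerivAt (hfc : ConvexOn ℝ univ f) (hgc : ConvexOn ℝ univ g)
    (hf : BddBelow (range f)) (hg : BddBelow (range g)) {φ : E →L[ℝ] ℝ} {y w : E}
    (hfy : HasFDerivAt f φ y) (hgw : HasFDerivAt g φ w) : infConv f g (y + w) = f y + g w := by
  refine le_antisymm (infConv_add_le hf hg y w) (le_ciInf fun u => ?_)
  have h₁ := hfc.add_le_of_hasFDerivAt hfy u
  have h₂ := hgc.add_le_of_hasFDerivAt hgw (y + w - u)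
  have h₃ : φ (u - y) + φ (y + w - u - w) = 0 := by
    rw [← map_add, show u - y + (y + w - u - w) = 0 by abel, map_zero]
  linarith

theorem fderiv_infConv_add_eq_of_hasFDerivAt (hfc : ConvexOn ℝ univ f) (hgc : ConvexOn ℝ univ g)
    (hf : BddBelow (range f)) (hg : BddBelow (range g)) {φ : E →L[ℝ] ℝ} {y w : E}
    (hfy : HasFDerivAt f φ y) (hgw : HasFDerivAt g φ w)
    (hh : DifferentiableAt ℝ (infConv f g) (y + w)) : fderiv ℝ (infConv f g) (y + w) = φ := by
  have hmin : IsLocalMin (fun x => f (x - w) + g w - infConv f g x) (y + w) := by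
    refine .of_forall fun x => ?_
    have := infConv_add_le hf hg (x - w) w
    rw [sub_add_cancel] at this
    simp [infConv_add_eq_of_hasFDerivAt hfc hgc hf hg hfy hgw]
    linarith
  have hd : HasFDerivAt (fun x => f (x - w) + g w - infConv f g x)
      (φ - fderiv ℝ (infConv f g) (y + w)) (y + w) := by
    have hfy' : HasFDerivAt f φ (y + w - w) := by simpa using hfy
    exact ((hfy'.comp (y + w) ((hasFDerivAt_id _).sub_const w)).add_const (g w)).fun_sub
      hh.hasFDerivAt
  exact (sub_eq_zero.1 (hmin.hasFDerivAt_eq_zero hd)).symm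

theorem eventually_fderiv_infConv_eq (hfc : ConvexOn ℝ univ f) (hgc : ConvexOn ℝ univ g)
    (hf : BddBelow (range f)) (hg : BddBelow (range g)) {N : (E →L[ℝ] ℝ) → E} {w₀ : E}
    (hNf : ∀ᶠ φ in 𝓝 (fderiv ℝ g w₀), fderiv ℝ f (N φ) = φ)
    (hNg : ContinuousAt (fun w => N (fderiv ℝ g w)) w₀) (hdg : ContinuousAt (fderiv ℝ g) w₀)
    (hfd : ∀ᶠ x in 𝓝 (N (fderiv ℝ g w₀)), DifferentiableAt ℝ f x)
    (hgd : ∀ᶠ w in 𝓝 w₀, DifferentiableAt ℝ g w)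
    (hhd : ∀ᶠ x in 𝓝 (N (fderiv ℝ g w₀) + w₀), DifferentiableAt ℝ (infConv f g) x) :
    ∀ᶠ w in 𝓝 w₀, fderiv ℝ (infConv f g) (N (fderiv ℝ g w) + w) = fderiv ℝ g w := by
  filter_upwards [hdg.tendsto.eventually hNf, hNg.tendsto.eventually hfd, hgd,
    (hNg.add continuousAt_id).tendsto.eventually hhd] with w hNw hfw hgw hhw
  have hfw' : HasFDerivAt f (fderiv ℝ g w) (N (fderiv ℝ g w)) := by
    simpa only [hNw] using hfw.hasFDerivAt
  exact fderiv_infConv_add_eq_of_hasFDerivAt hfc hgc hf hg hfw' hgw.hasFDerivAt hhw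

end InfConv

section Gradient

variable {E : Type*} [NormedAddCommGroup E] [NormedSpace ℝ E] [FiniteDimensional ℝ E]
  {k : ℕ} {α : ℝ} {f : E → ℝ} {a : E}

theorem isInvertible_fderiv_fderiv_of_pos
    (hpos : ∀ v : E, v ≠ 0 → 0 < iteratedFDeriv ℝ 2 f a ![v, v]) :
    (fderiv ℝ (fderiv ℝ f) a).IsInvertible := by
  set A := fderiv ℝ (fderiv ℝ f) a
  have hinj : Function.Injective A := by
    refine (injective_iff_map_eq_zero A).2 fun v hv => ?_
    by_contra hne
    have := hpos v hne
    simp [iteratedFDeriv_two_apply, A, hv] at this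
  have hdim : Module.finrank ℝ E = Module.finrank ℝ (E →L[ℝ] ℝ) := by
    rw [← LinearMap.toContinuousLinearMap.finrank_eq]
    simp
  exact ⟨(LinearMap.linearEquivOfInjective (A : E →ₗ[ℝ] E →L[ℝ] ℝ) hinj
    hdim).toContinuousLinearEquiv, rfl⟩

theorem CkAlphaNear.exists_rightInverse_fderiv (hf : CkAlphaNear (k + 1) α f a) (hk : k ≠ 0)
    (hα0 : 0 ≤ α) (hα1 : α ≤ 1)
    (hpos : ∀ v : E, v ≠ 0 → 0 < iteratedFDeriv ℝ 2 f a ![v, v]) :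
    ∃ N : (E →L[ℝ] ℝ) → E, N (fderiv ℝ f a) = a ∧
      CkAlphaNear k α N (fderiv ℝ f a) ∧
      ∀ᶠ φ in 𝓝 (fderiv ℝ f a), fderiv ℝ f (N φ) = φ := by
  obtain ⟨A, hA⟩ := isInvertible_fderiv_fderiv_of_pos hpos
  have hf' := (ckAlphaNear_succ_iff.1 hf).2
  have hs : HasStrictFDerivAt (fderiv ℝ f) (A : E →L[ℝ] E →L[ℝ] ℝ) a :=
    hA ▸ hf'.contDiffAt.hasStrictFDerivAt (by exact_mod_cast hk)
  exact ⟨_, hs.localInverse_apply_image, hs.ckAlphaNear_localInverse hf' hk hα0 hα1,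
    hs.eventually_right_inverse⟩

theorem CkAlphaNear.of_eventually_sub_comp_fderiv_eq {h : E → ℝ} {N : (E →L[ℝ] ℝ) → E}
    {T : E → E} (hN : CkAlphaNear k α N (fderiv ℝ h (T a)))
    (hh : CkAlphaNear (k + 1) α h (T a))
    (hk : k ≠ 0) (hα0 : 0 ≤ α) (hα1 : α ≤ 1) (hT : DifferentiableAt ℝ T a)
    (hTN : ∀ᶠ w in 𝓝 a, T w - N (fderiv ℝ h (T w)) = w) : CkAlphaNear k α T a :=
  ((contDiff_id.contDiffAt.ckAlphaNear hα1).sub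
    (hN.comp (ckAlphaNear_succ_iff.1 hh).2 hk hα0 hα1)).of_eventually_leftInverse
      hk hα0 hα1 hT hTN

end Gradient

theorem stmt5_general (n : ℕ) (k : ℕ) (hk : 2 ≤ k) (α : ℝ) (hα : α ∈ Icc (0:ℝ) 1)
    (f g : EuclideanSpace ℝ (Fin n) → ℝ)
    (hfnn : ∀ x, 0 ≤ f x) (hgnn : ∀ x, 0 ≤ g x)
    (hfconv : ConvexOn ℝ Set.univ f) (hgconv : ConvexOn ℝ Set.univ g)
    (hgC2 : ∃ V ∈ 𝓝 (0 : EuclideanSpace ℝ (Fin n)), ContDiffOn ℝ 2 g V)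
    (hf0 : f 0 = 0) (hg0 : g 0 = 0)
    (hfpos : ∀ v : EuclideanSpace ℝ (Fin n), v ≠ 0 →
      0 < iteratedFDeriv ℝ 2 f 0 ![v, v])
    (hfkα : CkAlphaNear k α f 0) (hhkα : CkAlphaNear k α (infConv f g) 0) :
    CkAlphaNear k α g 0 := by
  obtain ⟨m, rfl⟩ : ∃ m, k = m + 1 := ⟨k - 1, by omega⟩
  have hm : m ≠ 0 := by omega
  obtain ⟨hα0, hα1⟩ := hα
  have hfb : BddBelow (range f) := ⟨0, forall_mem_range.2 hfnn⟩
  have hgb : BddBelow (range g) := ⟨0, forall_mem_range.2 hgnn⟩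
  obtain ⟨V, hV, hgV⟩ := hgC2
  have hg2 : ContDiffAt ℝ 2 g 0 := hgV.contDiffAt hV
  have hgd : ∀ᶠ w in 𝓝 0, DifferentiableAt ℝ g w :=
    (hg2.eventually (by simp)).mono fun w hw => hw.differentiableAt (by simp)
  have hdg : DifferentiableAt ℝ (fderiv ℝ g) 0 :=
    (hg2.fderiv_right (m := 1) le_rfl).differentiableAt one_ne_zero
  have hdf0 : fderiv ℝ f 0 = 0 := IsLocalMin.fderiv_eq_zero (.of_forall fun x => hf0 ▸ hfnn x)
  have hdg0 : fderiv ℝ g 0 = 0 := IsLocalMin.fderiv_eq_zero (.of_forall fun x => hg0 ▸ hgnn x)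
  obtain ⟨N, hN0, hNk, hNf⟩ := hfkα.exists_rightInverse_fderiv hm hα0 hα1 hfpos
  rw [hdf0] at hN0 hNk hNf
  have hNg : DifferentiableAt ℝ (fun w => N (fderiv ℝ g w)) 0 := .comp (g := N) 0
    (hdg0 ▸ hNk.contDiffAt.differentiableAt (by exact_mod_cast hm)) hdg
  set T := fun w => N (fderiv ℝ g w) + w
  have hT0 : T 0 = 0 := by simp [T, hdg0, hN0]
  have hgradT : ∀ᶠ w in 𝓝 0, fderiv ℝ (infConv f g) (T w) = fderiv ℝ g w :=
    eventually_fderiv_infConv_eq hfconv hgconv hfb hgb (hdg0 ▸ hNf) hNg.continuousAt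
      hdg.continuousAt (by simpa [hdg0, hN0] using (ckAlphaNear_succ_iff.1 hfkα).1) hgd
      (by simpa [hdg0, hN0] using (ckAlphaNear_succ_iff.1 hhkα).1)
  have hTk : CkAlphaNear m α T 0 :=
    CkAlphaNear.of_eventually_sub_comp_fderiv_eq (by rwa [hgradT.self_of_nhds, hdg0])
      (hT0 ▸ hhkα) hm hα0 hα1 (hNg.add differentiableAt_id)
      (hgradT.mono fun w hw => by simp [T, hw])
  have hdhk : CkAlphaNear m α (fderiv ℝ (infConv f g)) (T 0) := by
    rw [hT0]
    exact (ckAlphaNear_succ_iff.1 hhkα).2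
  exact ckAlphaNear_succ_iff.2 ⟨hgd, (hdhk.comp hTk hm hα0 hα1).congr_of_eventuallyEq hgradT⟩

/-- Lemma 2.2 of the paper (last part). If `Hess f|₀ > 0` and both `f` and
`h = f □ g` are `C^{k,α}` near `0`, then so is `g`. -/
theorem stmt5 (n : ℕ) (hn : 1 ≤ n) (k : ℕ) (hk : 2 ≤ k) (α : ℝ) (hα : α ∈ Icc (0:ℝ) 1)
    (f g : EuclideanSpace ℝ (Fin n) → ℝ)
    (hfnn : ∀ x, 0 ≤ f x) (hgnn : ∀ x, 0 ≤ g x)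
    (hfconv : ConvexOn ℝ Set.univ f) (hgconv : ConvexOn ℝ Set.univ g)
    (hfC2 : ∃ V ∈ 𝓝 (0 : EuclideanSpace ℝ (Fin n)), ContDiffOn ℝ 2 f V)
    (hgC2 : ∃ V ∈ 𝓝 (0 : EuclideanSpace ℝ (Fin n)), ContDiffOn ℝ 2 g V)
    (hf0 : f 0 = 0) (hg0 : g 0 = 0)
    (hfpos : ∀ v : EuclideanSpace ℝ (Fin n), v ≠ 0 →
      0 < iteratedFDeriv ℝ 2 f 0 ![v, v])
    (hfkα : CkAlphaNear k α f 0) (hhkα : CkAlphaNear k α (infConv f g) 0) :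
    CkAlphaNear k α g 0 :=
  stmt5_general n k hk α hα f g hfnn hgnn hfconv hgconv hgC2 hf0 hg0 hfpos hfkα hhkα
end
end

section
/- Let n ≥ 2. Let Z₁ ⊆ S^{n−1} be a countable set and let Z₂ ⊆ S^{n−1} be closed and nowhere dense in S^{n−1}. Then the set {R ∈ SO(n) : R(Z₁) ∩ Z₂ = ∅} is a dense G_δ subset of SO(n) (in particular it is comeager). -/
open Set Topology

noncomputable section

/-- `SO(n)` as a subset of the `n × n` real matrices: orthogonal matrices of
determinant `1`, with the subspace topology. -/
def SOSet (n : ℕ) : Set (Matrix (Fin n) (Fin n) ℝ) :=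
  {A | A ∈ Matrix.orthogonalGroup (Fin n) ℝ ∧ A.det = 1}

/-- The natural action of a matrix on `EuclideanSpace ℝ (Fin n)`. -/
def matAct {n : ℕ} (A : Matrix (Fin n) (Fin n) ℝ) (z : EuclideanSpace ℝ (Fin n)) :
    EuclideanSpace ℝ (Fin n) :=
  (EuclideanSpace.equiv (Fin n) ℝ).symm (A.mulVec (EuclideanSpace.equiv (Fin n) ℝ z))

/-! The set of good rotations is `⋂ z ∈ Z₁, (R ↦ R z)⁻¹' Z₂ᶜ`, and `Z₂ᶜ` is open and dense in
the sphere. Each orbit map `R ↦ R z` from `SO(n)` to the sphere is continuous and also open: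
near `R₀`, the rotation `H(v + w) H(v) R₀`, a product of two Householder reflections, depends
continuously on `w` and carries `z` to `w`, where `v = R₀ z`. So each preimage is open and dense,
and since `SO(n)` is closed in the locally compact space of matrices, Baire's theorem applies. -/

open Matrix WithLp

namespace Matrix

section Householder

variable {ι K : Type*} [Fintype ι] [DecidableEq ι] [Field K]

/-- The reflection in the hyperplane orthogonal to `u`; junk value `1` when `u ⬝ᵥ u = 0`. -/
def householder (u : ι → K) : Matrix ι ι K :=
  1 - (2 / (u ⬝ᵥ u)) • vecMulVec u u

theorem householder_mulVec (u x : ι → K) :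
    householder u *ᵥ x = x - (2 / (u ⬝ᵥ u) * (u ⬝ᵥ x)) • u := by
  rw [householder, sub_mulVec, smul_mulVec, vecMulVec_mulVec, op_smul_eq_smul, one_mulVec,
    smul_smul]

theorem householder_mulVec_self {u : ι → K} (hu : u ⬝ᵥ u ≠ 0) :
    householder u *ᵥ u = -u := by
  rw [householder_mulVec, div_mul_cancel₀ _ hu, two_smul]
  abel

theorem householder_sub_mulVec {x y : ι → K} (hxy : x ⬝ᵥ x = y ⬝ᵥ y)
    (h : (x - y) ⬝ᵥ (x - y) ≠ 0) : householder (x - y) *ᵥ x = y := by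
  have hcoef : 2 / ((x - y) ⬝ᵥ (x - y)) * ((x - y) ⬝ᵥ x) = 1 := by
    rw [div_mul_eq_mul_div, div_eq_one_iff_eq h]
    simp only [sub_dotProduct, dotProduct_sub, dotProduct_comm y x, hxy]
    ring
  rw [householder_mulVec, hcoef, one_smul, sub_sub_cancel]

theorem householder_smul {c : K} (hc : c ≠ 0) (u : ι → K) :
    householder (c • u) = householder u := by
  rw [householder, householder, smul_dotProduct, dotProduct_smul, smul_vecMulVec,
    vecMulVec_smul, smul_smul, smul_smul]
  congr 2
  by_cases hu : u ⬝ᵥ u = 0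
  · simp [hu]
  · simp only [smul_eq_mul]
    field_simp

theorem householder_mul_self {u : ι → K} (hu : u ⬝ᵥ u ≠ 0) :
    householder u * householder u = 1 := by
  have hsq : vecMulVec u u * vecMulVec u u = (u ⬝ᵥ u) • vecMulVec u u := by
    rw [vecMulVec_mul_vecMulVec, vecMulVec_smul]
  have hcoef :
      2 / (u ⬝ᵥ u) * (2 / (u ⬝ᵥ u) * (u ⬝ᵥ u)) = 2 / (u ⬝ᵥ u) + 2 / (u ⬝ᵥ u) := by
    field_simp
    ring
  simp only [householder, mul_sub, sub_mul, mul_one, one_mul, Matrix.smul_mul, Matrix.mul_smul,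
    hsq, smul_smul, hcoef, add_smul]
  abel

theorem transpose_householder (u : ι → K) : (householder u)ᵀ = householder u := by
  rw [householder, transpose_sub, transpose_one, transpose_smul, transpose_vecMulVec]

theorem householder_mem_orthogonalGroup {u : ι → K} (hu : u ⬝ᵥ u ≠ 0) :
    householder u ∈ orthogonalGroup ι K := by
  rw [mem_orthogonalGroup_iff, transpose_householder, householder_mul_self hu]

theorem det_householder {u : ι → K} (hu : u ⬝ᵥ u ≠ 0) : (householder u).det = -1 := by
  rw [householder, sub_eq_add_neg, ← neg_smul, ← smul_vecMulVec, vecMulVec_eq Unit,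
    det_one_add_replicateCol_mul_replicateRow, dotProduct_smul, smul_eq_mul,
    neg_mul, div_mul_cancel₀ _ hu]
  norm_num

def householderRotation (x y : ι → K) : Matrix ι ι K :=
  householder (x + y) * householder x

theorem householderRotation_mulVec {x y : ι → K} (hxy : x ⬝ᵥ x = y ⬝ᵥ y)
    (hx : x ⬝ᵥ x ≠ 0) (h : (x + y) ⬝ᵥ (x + y) ≠ 0) : householderRotation x y *ᵥ x = y := by
  have hneg : -x - y = (-1 : K) • (x + y) := by rw [neg_one_smul, neg_add']
  have h' : (-x - y) ⬝ᵥ (-x - y) ≠ 0 := by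
    rwa [hneg, smul_dotProduct, dotProduct_smul, smul_smul, neg_one_mul, neg_neg, one_smul]
  rw [householderRotation, ← mulVec_mulVec, householder_mulVec_self hx,
    ← householder_smul (neg_ne_zero.2 one_ne_zero), ← hneg]
  exact householder_sub_mulVec (by rwa [neg_dotProduct, dotProduct_neg, neg_neg]) h'

theorem householderRotation_self [NeZero (2 : K)] {x : ι → K} (hx : x ⬝ᵥ x ≠ 0) :
    householderRotation x x = 1 := by
  rw [householderRotation, ← two_smul K x, householder_smul two_ne_zero,
    householder_mul_self hx]

theorem householderRotation_mem_orthogonalGroup {x y : ι → K} (hx : x ⬝ᵥ x ≠ 0)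
    (h : (x + y) ⬝ᵥ (x + y) ≠ 0) : householderRotation x y ∈ orthogonalGroup ι K :=
  mul_mem (householder_mem_orthogonalGroup h) (householder_mem_orthogonalGroup hx)

theorem det_householderRotation {x y : ι → K} (hx : x ⬝ᵥ x ≠ 0)
    (h : (x + y) ⬝ᵥ (x + y) ≠ 0) : (householderRotation x y).det = 1 := by
  rw [householderRotation, det_mul, det_householder h, det_householder hx, neg_one_mul, neg_neg]

section Topology

variable [TopologicalSpace K] [IsTopologicalDivisionRing K]

theorem continuousAt_householder {u : ι → K} (hu : u ⬝ᵥ u ≠ 0) :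
    ContinuousAt householder u := by
  have hdot : Continuous fun v : ι → K => v ⬝ᵥ v := continuous_id.dotProduct continuous_id
  exact continuousAt_const.sub ((continuousAt_const.div hdot.continuousAt hu).smul
    (continuous_id.matrix_vecMulVec continuous_id).continuousAt)

theorem continuousAt_householderRotation {x y : ι → K} (h : (x + y) ⬝ᵥ (x + y) ≠ 0) :
    ContinuousAt (householderRotation x) y :=
  ((continuousAt_householder h).comp (continuous_const.add continuous_id).continuousAt).mul
    continuousAt_const

end Topology

end Householder

theorem dotProduct_mulVec_mulVec_of_mem_orthogonalGroup {ι K : Type*} [Fintype ι]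
    [DecidableEq ι] [CommRing K] {A : Matrix ι ι K} (hA : A ∈ orthogonalGroup ι K)
    (x y : ι → K) : (A *ᵥ x) ⬝ᵥ (A *ᵥ y) = x ⬝ᵥ y := by
  rw [dotProduct_mulVec, vecMul_mulVec, (mem_orthogonalGroup_iff' ι K).1 hA, vecMul_one]

end Matrix

theorem EuclideanSpace.norm_sq_eq_dotProduct {ι : Type*} [Fintype ι]
    (x : EuclideanSpace ℝ ι) : ‖x‖ ^ 2 = ofLp x ⬝ᵥ ofLp x := by
  rw [← real_inner_self_eq_norm_sq, EuclideanSpace.inner_eq_star_dotProduct, star_trivial]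

theorem dotProduct_self_eq_one_of_mem_sphere {ι : Type*} [Fintype ι]
    {w : EuclideanSpace ℝ ι} (hw : w ∈ Metric.sphere 0 1) : ofLp w ⬝ᵥ ofLp w = 1 := by
  rw [← EuclideanSpace.norm_sq_eq_dotProduct, mem_sphere_zero_iff_norm.1 hw, one_pow]

section matAct

variable {n : ℕ}

theorem norm_matAct {A : Matrix (Fin n) (Fin n) ℝ} (hA : A ∈ orthogonalGroup (Fin n) ℝ)
    (z : EuclideanSpace ℝ (Fin n)) : ‖matAct A z‖ = ‖z‖ := by
  rw [← sq_eq_sq₀ (norm_nonneg _) (norm_nonneg _), EuclideanSpace.norm_sq_eq_dotProduct,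
    EuclideanSpace.norm_sq_eq_dotProduct]
  exact dotProduct_mulVec_mulVec_of_mem_orthogonalGroup hA _ _

theorem matAct_mul (A B : Matrix (Fin n) (Fin n) ℝ) (z : EuclideanSpace ℝ (Fin n)) :
    matAct (A * B) z = matAct A (matAct B z) := by
  simp only [matAct, ContinuousLinearEquiv.apply_symm_apply, mulVec_mulVec]

theorem matAct_householderRotation_mul {R : Matrix (Fin n) (Fin n) ℝ}
    {z w : EuclideanSpace ℝ (Fin n)} (hzw : ‖matAct R z‖ = ‖w‖) (hz : matAct R z ≠ 0)
    (h : (ofLp (matAct R z) + ofLp w) ⬝ᵥ (ofLp (matAct R z) + ofLp w) ≠ 0) :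
    matAct (householderRotation (ofLp (matAct R z)) (ofLp w) * R) z = w := by
  have hdot : ofLp (matAct R z) ⬝ᵥ ofLp (matAct R z) = ofLp w ⬝ᵥ ofLp w := by
    rw [← EuclideanSpace.norm_sq_eq_dotProduct, ← EuclideanSpace.norm_sq_eq_dotProduct, hzw]
  have hz' : ofLp (matAct R z) ⬝ᵥ ofLp (matAct R z) ≠ 0 := by
    rwa [← EuclideanSpace.norm_sq_eq_dotProduct, pow_ne_zero_iff two_ne_zero, norm_ne_zero_iff]
  rw [matAct_mul]
  exact congrArg (toLp 2) (householderRotation_mulVec hdot hz' h)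

end matAct

namespace SOSet

variable {n : ℕ}

theorem isClosed : IsClosed (SOSet n) := by
  have h : SOSet n = {A | A * Aᵀ = 1} ∩ {A | A.det = 1} := by
    ext A
    exact and_congr_left' (mem_orthogonalGroup_iff (Fin n) ℝ)
  rw [h]
  exact (isClosed_eq (continuous_id.mul continuous_id.matrix_transpose) continuous_const).inter
    (isClosed_eq continuous_id.matrix_det continuous_const)

instance : BaireSpace (SOSet n) :=
  haveI : LocallyCompactSpace (Matrix (Fin n) (Fin n) ℝ) :=
    inferInstanceAs (LocallyCompactSpace (Fin n → Fin n → ℝ))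
  haveI := (isClosed (n := n)).locallyCompactSpace
  inferInstance

theorem householderRotation_mul_mem {x y : Fin n → ℝ} (hx : x ⬝ᵥ x ≠ 0)
    (h : (x + y) ⬝ᵥ (x + y) ≠ 0) {R : Matrix (Fin n) (Fin n) ℝ} (hR : R ∈ SOSet n) :
    householderRotation x y * R ∈ SOSet n :=
  ⟨mul_mem (householderRotation_mem_orthogonalGroup hx h) hR.1, by
    rw [det_mul, det_householderRotation hx h, hR.2, one_mul]⟩

def orbitMap (z : Metric.sphere (0 : EuclideanSpace ℝ (Fin n)) 1) (R : SOSet n) :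
    Metric.sphere (0 : EuclideanSpace ℝ (Fin n)) 1 :=
  ⟨matAct R z, by simpa only [mem_sphere_zero_iff_norm, norm_matAct R.2.1] using z.2⟩

theorem coe_orbitMap (z : Metric.sphere (0 : EuclideanSpace ℝ (Fin n)) 1) (R : SOSet n) :
    (orbitMap z R : EuclideanSpace ℝ (Fin n)) = matAct R z :=
  rfl

theorem continuous_orbitMap (z : Metric.sphere (0 : EuclideanSpace ℝ (Fin n)) 1) :
    Continuous (orbitMap z) := by
  unfold orbitMap matAct
  fun_prop

theorem isOpenMap_orbitMap (z : Metric.sphere (0 : EuclideanSpace ℝ (Fin n)) 1) :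
    IsOpenMap (orbitMap z) := by
  refine isOpenMap_iff_nhds_le.2 fun R₀ => Filter.le_map_iff.2 fun U hU => ?_
  obtain ⟨V, hV, hVU⟩ := (mem_nhds_subtype _ _ _).1 hU
  set v : Fin n → ℝ := ofLp (matAct R₀ z)
  have hv : v ⬝ᵥ v ≠ 0 :=
    (dotProduct_self_eq_one_of_mem_sphere (orbitMap z R₀).2).trans_ne one_ne_zero
  have hvv : (v + v) ⬝ᵥ (v + v) ≠ 0 := by
    rw [← two_smul ℝ v, smul_dotProduct, dotProduct_smul]
    exact mul_ne_zero two_ne_zero (mul_ne_zero two_ne_zero hv)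
  have hcoords : Continuous fun w : Metric.sphere (0 : EuclideanSpace ℝ (Fin n)) 1 =>
      ofLp w.1 := by fun_prop
  -- `w ↦ householderRotation v w * R₀` is a local section of the orbit map through `R₀`.
  have hsection :
      ∀ᶠ w : Metric.sphere (0 : EuclideanSpace ℝ (Fin n)) 1 in 𝓝 (orbitMap z R₀),
        householderRotation v (ofLp w.1) * R₀.1 ∈ V ∧ (v + ofLp w.1) ⬝ᵥ (v + ofLp w.1) ≠ 0 := by
    refine Filter.Eventually.and ?_ ?_
    · refine (((continuousAt_householderRotation hvv).comp_of_eq hcoords.continuousAt rfl).mul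
        continuousAt_const).eventually_mem ?_
      change V ∈ 𝓝 (householderRotation v v * R₀.1)
      rwa [householderRotation_self hv, one_mul]
    · exact ((continuous_const.add hcoords).dotProduct
        (continuous_const.add hcoords)).continuousAt.eventually_ne hvv
  filter_upwards [hsection] with w ⟨hwV, hw⟩
  refine ⟨⟨_, householderRotation_mul_mem hv hw R₀.2⟩, hVU hwV, Subtype.ext ?_⟩
  exact matAct_householderRotation_mul
    ((norm_eq_of_mem_sphere (orbitMap z R₀)).trans (norm_eq_of_mem_sphere w).symm)
    (ne_zero_of_mem_unit_sphere (orbitMap z R₀)) hw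

end SOSet

theorem stmt7_general (n : ℕ)
    (Z₁ Z₂ : Set (Metric.sphere (0 : EuclideanSpace ℝ (Fin n)) 1))
    (hZ₁ : Z₁.Countable) (hZ₂closed : IsClosed Z₂) (hZ₂nd : IsNowhereDense Z₂) :
    IsGδ {R : SOSet n | ∀ z ∈ Z₁, matAct R.val z.val ∉ (Subtype.val '' Z₂)} ∧
    Dense {R : SOSet n | ∀ z ∈ Z₁, matAct R.val z.val ∉ (Subtype.val '' Z₂)} := by
  obtain ⟨hopen, hdense⟩ := isClosed_isNowhereDense_iff_compl.1 ⟨hZ₂closed, hZ₂nd⟩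
  have hset : {R : SOSet n | ∀ z ∈ Z₁, matAct R.val z.val ∉ (Subtype.val '' Z₂)} =
      ⋂ z ∈ Z₁, SOSet.orbitMap z ⁻¹' Z₂ᶜ := by
    ext R
    simp [← SOSet.coe_orbitMap, Subtype.val_injective.mem_set_image]
  have hopen_z (z) : IsOpen (SOSet.orbitMap z ⁻¹' Z₂ᶜ) :=
    hopen.preimage (SOSet.continuous_orbitMap z)
  rw [hset]
  exact ⟨.biInter hZ₁ fun z _ => (hopen_z z).isGδ,
    dense_biInter_of_isOpen (fun z _ => hopen_z z) hZ₁
      fun z _ => hdense.preimage (SOSet.isOpenMap_orbitMap z)⟩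

/-- if `Z₁ ⊆ S^{n-1}` is countable and `Z₂ ⊆ S^{n-1}` is closed and nowhere
dense in the sphere, then `{R ∈ SO(n) : R(Z₁) ∩ Z₂ = ∅}` is a dense `G_δ` in `SO(n)`. -/
theorem stmt7 (n : ℕ) (hn : 2 ≤ n)
    (Z₁ Z₂ : Set (Metric.sphere (0 : EuclideanSpace ℝ (Fin n)) 1))
    (hZ₁ : Z₁.Countable) (hZ₂closed : IsClosed Z₂) (hZ₂nd : IsNowhereDense Z₂) :
    IsGδ {R : SOSet n | ∀ z ∈ Z₁, matAct R.val z.val ∉ (Subtype.val '' Z₂)} ∧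
    Dense {R : SOSet n | ∀ z ∈ Z₁, matAct R.val z.val ∉ (Subtype.val '' Z₂)} :=
  stmt7_general n Z₁ Z₂ hZ₁ hZ₂closed hZ₂nd
end
end

section
/- Let J ⊂ ℝ be a compact interval, c an endpoint of J, and f ∈ C^∞(J) pliable at c, with pliable series f = Σ_{k ≥ k₀} c_k g_k. Then for every integer r ≥ 0 the partial sums Σ_{k=k₀}^{l} c_k g_k converge to f in the norm ‖·‖_{C^r(J)} as l → ∞. -/
open Set Filter Topology

noncomputable section

/-- The `C^r` norm `‖f‖_{C^r(J)} = ∑_{i=0}^{r} max_J |f^{(i)}|` of a function on a set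
`J ⊆ ℝ` (derivatives taken within `J`). -/
def CrNorm (r : ℕ) (f : ℝ → ℝ) (J : Set ℝ) : ℝ :=
  ∑ i ∈ Finset.range (r + 1), ⨆ x : J, |iteratedDerivWithin i f J (x : ℝ)|

/-- The support of `g` relative to the interval `[a,b]`: the closure of the set of points
of `[a,b]` where `g` is nonzero. -/
def suppOn (a b : ℝ) (g : ℝ → ℝ) : Set ℝ :=
  closure {x | x ∈ Set.Icc a b ∧ g x ≠ 0}

/-- The data `(k₀, cs, g)` is a series witnessing that `f` is pliable at the endpoint `c`
of the interval `[a,b]`: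
* `f = Σ_{k ≥ k₀} cs k • g k` pointwise on `[a,b]`;
* the `cs k` are positive and super-exponentially converge to `0`;
* the `g k` are `C^∞` on `[a,b]`, their supports form a locally finite family of compact
  subsets of `[a,b] ∖ {c}`, and for every `r` the `C^r` norms of `g k` grow at most
  exponentially in `k`;
* there is `L > 0` such that whenever `0 < 2ε < b - a`, the set `J_ε` of indices `k ≥ k₀`
  whose support meets `{x ∈ [a,b] : ε ≤ |x - c| ≤ 2ε}` has at most `L` elements, and
  `2^{-kL} ≤ ε` for every `k ∈ J_ε`. -/
structure IsPliableSeries (a b c : ℝ) (f : ℝ → ℝ) (k₀ : ℤ) (cs : ℤ → ℝ)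
    (g : ℤ → ℝ → ℝ) : Prop where
  sum_eq : ∀ x ∈ Set.Icc a b,
    HasSum (fun k : {k : ℤ // k₀ ≤ k} => cs k.val * g k.val x) (f x)
  cs_pos : ∀ k : ℤ, k₀ ≤ k → 0 < cs k
  cs_superexp : ∀ γ : ℝ,
    Tendsto (fun k : ℤ => (2 : ℝ) ^ (γ * (k : ℝ)) * cs k) atTop (𝓝 0)
  g_smooth : ∀ k : ℤ, k₀ ≤ k → ContDiffOn ℝ (⊤ : ℕ∞) (g k) (Set.Icc a b)
  supp_compact : ∀ k : ℤ, k₀ ≤ k → IsCompact (suppOn a b (g k))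
  supp_subset : ∀ k : ℤ, k₀ ≤ k → suppOn a b (g k) ⊆ Set.Icc a b \ {c}
  supp_locFin : ∀ x ∈ Set.Icc a b \ {c}, ∃ U ∈ 𝓝 x,
    {k : ℤ | k₀ ≤ k ∧ (suppOn a b (g k) ∩ U).Nonempty}.Finite
  norm_growth : ∀ r : ℕ, ∃ γ M : ℝ, ∀ k : ℤ, k₀ ≤ k →
    (2 : ℝ) ^ (γ * (k : ℝ)) * CrNorm r (g k) (Set.Icc a b) ≤ M
  index_bound : ∃ L : ℕ, 0 < L ∧ ∀ ε : ℝ, 0 < ε → 2 * ε < b - a →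
    {k : ℤ | k₀ ≤ k ∧ (suppOn a b (g k) ∩
      {x ∈ Set.Icc a b | ε ≤ |x - c| ∧ |x - c| ≤ 2 * ε}).Nonempty}.Finite ∧
    {k : ℤ | k₀ ≤ k ∧ (suppOn a b (g k) ∩
      {x ∈ Set.Icc a b | ε ≤ |x - c| ∧ |x - c| ≤ 2 * ε}).Nonempty}.ncard ≤ L ∧
    ∀ k : ℤ, k₀ ≤ k →
      (suppOn a b (g k) ∩ {x ∈ Set.Icc a b | ε ≤ |x - c| ∧ |x - c| ≤ 2 * ε}).Nonempty →
      (2 : ℝ) ^ (-(k : ℝ) * (L : ℝ)) ≤ ε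

/-- `f` is pliable at the endpoint `c` of `[a,b]`. -/
def Pliable (a b c : ℝ) (f : ℝ → ℝ) : Prop :=
  ∃ (k₀ : ℤ) (cs : ℤ → ℝ) (g : ℤ → ℝ → ℝ), IsPliableSeries a b c f k₀ cs g

/-!
Fix `r` and `η > 0`. Since `c_k` decays faster than any exponential while `‖g_k‖_{C^r}` grows
at most exponentially, `c_k ‖g_k‖_{C^r} ≤ η` for all `k ≥ K`; put `ε₀ = min(2^{-KL}, |J|/2)`.
Near a point `x ≠ c` the remainder `f - Σ_{k ≤ l} c_k g_k` is a finite sum of terms `c_k g_k`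
with `k > l`:
* if `|x - c| ≥ ε₀`, local finiteness and compactness leave no such term once `l` is large;
* if `ε := |x - c| < ε₀ ≤ 2^{-KL}`, only the at most `2L` indices of `J_ε ∪ J_{ε/2}` occur,
  and each of them satisfies `2^{-kL} ≤ ε`, hence `k ≥ K`.
In both cases the derivatives of order `≤ r` of the remainder are at most `2Lη` on
`J ∖ {c}`, hence on `J` by continuity, and its `C^r` norm is at most `(r + 1) 2L η`.
-/

theorem HasSum.eq_sum_filter_of_ne_zero_mem {ι α : Type*} [AddCommMonoid α] [TopologicalSpace α]
    [T2Space α] {p : ι → Prop} [DecidablePred p] {ψ : ι → α} {S : α}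
    (h : HasSum (fun i : Subtype p => ψ i) S) {T : Finset ι}
    (hT : ∀ i, p i → ψ i ≠ 0 → i ∈ T) :
    S = ∑ i ∈ T.filter p, ψ i := by
  rw [← Finset.sum_subtype_eq_sum_filter]
  exact h.unique <| hasSum_sum_of_ne_finset_zero fun i hi =>
    by_contra fun hne => hi (Finset.mem_subtype.2 (hT i i.2 hne))

theorem tendsto_zero_of_forall_eventually_le_mul {α : Type*} {l : Filter α} {u : α → ℝ}
    (C : ℝ) (hu : ∀ a, 0 ≤ u a) (h : ∀ η > 0, ∀ᶠ a in l, u a ≤ C * η) :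
    Tendsto u l (𝓝 0) := by
  refine tendsto_order.2 ⟨fun δ hδ => Eventually.of_forall fun a => hδ.trans_le (hu a),
    fun δ hδ => ?_⟩
  have hC : 0 < |C| + 1 := by positivity
  filter_upwards [h (δ / (|C| + 1)) (div_pos hδ hC)] with a ha
  calc u a ≤ C * (δ / (|C| + 1)) := ha
    _ ≤ |C| * (δ / (|C| + 1)) := by gcongr; exact le_abs_self C
    _ < δ := by rw [mul_div_assoc', div_lt_iff₀ hC]; nlinarith [abs_nonneg C]

theorem Icc_subset_closure_Icc_diff_singleton {a b : ℝ} (hab : a < b) (c : ℝ) :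
    Icc a b ⊆ closure (Icc a b \ {c}) := by
  intro x hx
  by_cases hxc : x = c
  · subst hxc
    rcases hx.2.lt_or_eq with hxb | rfl
    · have hx' : x ∈ closure (Ioo x b) := by
        rw [closure_Ioo hxb.ne]
        exact left_mem_Icc.2 hxb.le
      have hsub : Ioo x b ⊆ Icc a b \ {x} := fun y hy =>
        ⟨Ioo_subset_Icc_self ⟨hx.1.trans_lt hy.1, hy.2⟩, hy.1.ne'⟩
      exact closure_mono hsub hx'
    · have hx' : x ∈ closure (Ioo a x) := by
        rw [closure_Ioo hab.ne]
        exact right_mem_Icc.2 hab.le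
      have hsub : Ioo a x ⊆ Icc a x \ {x} := fun y hy => ⟨Ioo_subset_Icc_self hy, hy.2.ne⟩
      exact closure_mono hsub hx'
  · exact subset_closure ⟨hx, hxc⟩

theorem CrNorm_nonneg (r : ℕ) (h : ℝ → ℝ) (J : Set ℝ) : 0 ≤ CrNorm r h J :=
  Finset.sum_nonneg fun _ _ => Real.iSup_nonneg fun _ => abs_nonneg _

theorem abs_iteratedDerivWithin_le_CrNorm {J : Set ℝ} (hJ : IsCompact J)
    (hJu : UniqueDiffOn ℝ J) {r i : ℕ} {h : ℝ → ℝ} (hh : ContDiffOn ℝ r h J) (hi : i ≤ r)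
    {x : ℝ} (hx : x ∈ J) :
    |iteratedDerivWithin i h J x| ≤ CrNorm r h J := by
  have hcont : ContinuousOn (fun y => |iteratedDerivWithin i h J y|) J :=
    (hh.continuousOn_iteratedDerivWithin (by exact_mod_cast hi) hJu).abs
  have hbdd : BddAbove (range fun y : J => |iteratedDerivWithin i h J y|) := by
    simpa only [image_eq_range] using hJ.bddAbove_image hcont
  calc |iteratedDerivWithin i h J x| ≤ ⨆ y : J, |iteratedDerivWithin i h J y| :=
        le_ciSup hbdd ⟨x, hx⟩
    _ ≤ CrNorm r h J :=
        Finset.single_le_sum (f := fun j => ⨆ y : J, |iteratedDerivWithin j h J y|)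
          (fun _ _ => Real.iSup_nonneg fun _ => abs_nonneg _)
          (Finset.mem_range.2 (Nat.lt_succ_of_le hi))

theorem CrNorm_le_of_forall_abs_le {r : ℕ} {h : ℝ → ℝ} {J : Set ℝ} {B : ℝ} (hB : 0 ≤ B)
    (hbound : ∀ i ≤ r, ∀ x ∈ J, |iteratedDerivWithin i h J x| ≤ B) :
    CrNorm r h J ≤ (r + 1) * B := by
  calc CrNorm r h J ≤ ∑ _i ∈ Finset.range (r + 1), B :=
        Finset.sum_le_sum fun i hi => Real.iSup_le
          (fun x => hbound i (Nat.lt_succ_iff.1 (Finset.mem_range.1 hi)) x x.2) hB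
    _ = (r + 1) * B := by simp

theorem CrNorm_Icc_le_of_forall_ne {a b c : ℝ} (hab : a < b) {r : ℕ} {h : ℝ → ℝ} {B : ℝ}
    (hh : ContDiffOn ℝ r h (Icc a b)) (hB : 0 ≤ B)
    (hbound : ∀ i ≤ r, ∀ x ∈ Icc a b, x ≠ c → |iteratedDerivWithin i h (Icc a b) x| ≤ B) :
    CrNorm r h (Icc a b) ≤ (r + 1) * B := by
  refine CrNorm_le_of_forall_abs_le hB fun i hi x hx => ?_
  have hcont : ContinuousOn (fun y => |iteratedDerivWithin i h (Icc a b) y|)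
      (closure (Icc a b \ {c})) :=
    (hh.continuousOn_iteratedDerivWithin (by exact_mod_cast hi) (uniqueDiffOn_Icc hab)).abs.mono
      (closure_minimal sdiff_subset isClosed_Icc)
  exact le_on_closure (fun y hy => hbound i hi y hy.1 hy.2) hcont continuousOn_const
    (Icc_subset_closure_Icc_diff_singleton hab c hx)

namespace IsPliableSeries

variable {a b c : ℝ} {f : ℝ → ℝ} {k₀ : ℤ} {cs : ℤ → ℝ} {g : ℤ → ℝ → ℝ}

theorem tendsto_mul_CrNorm (hf : IsPliableSeries a b c f k₀ cs g) (r : ℕ) :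
    Tendsto (fun k => cs k * CrNorm r (g k) (Icc a b)) atTop (𝓝 0) := by
  obtain ⟨γ, C, hγ⟩ := hf.norm_growth r
  have hdom : Tendsto (fun k : ℤ => C * ((2 : ℝ) ^ (-γ * k) * cs k)) atTop (𝓝 0) := by
    simpa using (hf.cs_superexp (-γ)).const_mul C
  refine tendsto_of_tendsto_of_tendsto_of_le_of_le' tendsto_const_nhds hdom ?_ ?_
  · filter_upwards [eventually_ge_atTop k₀] with k hk
    exact mul_nonneg (hf.cs_pos k hk).le (CrNorm_nonneg _ _ _)
  · filter_upwards [eventually_ge_atTop k₀] with k hk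
    have hpow : (2 : ℝ) ^ (-γ * k) = ((2 : ℝ) ^ (γ * k))⁻¹ := by
      rw [neg_mul, Real.rpow_neg zero_le_two]
    have hnorm : CrNorm r (g k) (Icc a b) ≤ (2 : ℝ) ^ (-γ * k) * C := by
      rw [hpow, ← div_eq_inv_mul, le_div_iff₀ (by positivity), mul_comm]
      exact hγ k hk
    calc cs k * CrNorm r (g k) (Icc a b) ≤ cs k * ((2 : ℝ) ^ (-γ * k) * C) :=
          mul_le_mul_of_nonneg_left hnorm (hf.cs_pos k hk).le
      _ = C * ((2 : ℝ) ^ (-γ * k) * cs k) := by ring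

theorem sub_partialSum_eq_sum (hf : IsPliableSeries a b c f k₀ cs g) {y : ℝ}
    (hy : y ∈ Icc a b) (l : ℤ) {E : Finset ℤ}
    (hE : ∀ k, k₀ ≤ k → l < k → g k y ≠ 0 → k ∈ E) :
    f y - ∑ k ∈ Finset.Icc k₀ l, cs k * g k y
      = ∑ k ∈ E.filter (fun k => k₀ ≤ k ∧ l < k), cs k * g k y := by
  have hsum := (hf.sum_eq y hy).eq_sum_filter_of_ne_zero_mem
    (ψ := fun k => cs k * g k y) (T := Finset.Icc k₀ l ∪ E) fun k hk hne => by
      rcases le_or_gt k l with hkl | hlk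
      · exact Finset.mem_union_left _ (Finset.mem_Icc.2 ⟨hk, hkl⟩)
      · exact Finset.mem_union_right _ (hE k hk hlk (right_ne_zero_of_mul hne))
  have hlow : (Finset.Icc k₀ l ∪ E).filter (fun k => k₀ ≤ k ∧ k ≤ l) = Finset.Icc k₀ l := by
    ext k
    simp only [Finset.mem_filter, Finset.mem_union, Finset.mem_Icc]
    grind
  have hhigh : (Finset.Icc k₀ l ∪ E).filter (fun k => k₀ ≤ k ∧ ¬k ≤ l)
      = E.filter (fun k => k₀ ≤ k ∧ l < k) := by
    ext k
    simp only [Finset.mem_filter, Finset.mem_union, Finset.mem_Icc]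
    grind
  rw [hsum, ← Finset.sum_filter_add_sum_filter_not _ (fun k => k ≤ l), Finset.filter_filter,
    Finset.filter_filter, hlow, hhigh, add_sub_cancel_left]

theorem abs_iteratedDerivWithin_sub_partialSum_le (hf : IsPliableSeries a b c f k₀ cs g)
    (hab : a < b) {r i : ℕ} (hi : i ≤ r) {x : ℝ} (hx : x ∈ Icc a b) {U : Set ℝ} (hU : U ∈ 𝓝 x)
    (l : ℤ) {E : Finset ℤ}
    (hE : ∀ k, k₀ ≤ k → l < k → (suppOn a b (g k) ∩ U).Nonempty → k ∈ E) :
    |iteratedDerivWithin i (fun y => f y - ∑ k ∈ Finset.Icc k₀ l, cs k * g k y) (Icc a b) x|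
      ≤ ∑ k ∈ E.filter (fun k => k₀ ≤ k ∧ l < k), cs k * CrNorm r (g k) (Icc a b) := by
  have hloc : (fun y => f y - ∑ k ∈ Finset.Icc k₀ l, cs k * g k y)
      =ᶠ[𝓝[Icc a b] x] fun y => ∑ k ∈ E.filter (fun k => k₀ ≤ k ∧ l < k), cs k * g k y := by
    filter_upwards [nhdsWithin_le_nhds hU, self_mem_nhdsWithin] with y hyU hy
    exact hf.sub_partialSum_eq_sum hy l fun k hk hlk hne =>
      hE k hk hlk ⟨y, subset_closure ⟨hy, hne⟩, hyU⟩
  rw [hloc.iteratedDerivWithin_eq (hloc.eq_of_nhdsWithin hx),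
    iteratedDerivWithin_fun_sum hx (uniqueDiffOn_Icc hab) fun k hk =>
      contDiffWithinAt_const.mul (((hf.g_smooth k (Finset.mem_filter.1 hk).2.1).of_le
        (by exact_mod_cast le_top)).contDiffWithinAt hx)]
  refine (Finset.abs_sum_le_sum_abs _ _).trans (Finset.sum_le_sum fun k hk => ?_)
  have hk₀ := (Finset.mem_filter.1 hk).2.1
  rw [iteratedDerivWithin_const_mul_field, abs_mul, abs_of_pos (hf.cs_pos k hk₀)]
  exact mul_le_mul_of_nonneg_left
    (abs_iteratedDerivWithin_le_CrNorm isCompact_Icc (uniqueDiffOn_Icc hab)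
      ((hf.g_smooth k hk₀).of_le (by exact_mod_cast le_top)) hi hx) (hf.cs_pos k hk₀).le

theorem finite_setOf_suppOn_inter_nonempty (hf : IsPliableSeries a b c f k₀ cs g)
    {K : Set ℝ} (hK : IsCompact K) (hKc : K ⊆ Icc a b \ {c}) :
    {k | k₀ ≤ k ∧ (suppOn a b (g k) ∩ K).Nonempty}.Finite := by
  choose U hU hUfin using fun y (hy : y ∈ K) => hf.supp_locFin y (hKc hy)
  obtain ⟨t, ht⟩ := hK.elim_nhds_subcover' U hU
  refine (t.finite_toSet.biUnion fun y _ => hUfin y y.2).subset ?_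
  rintro k ⟨hk, z, hz, hzK⟩
  obtain ⟨y, hyt, hzU⟩ := mem_iUnion₂.1 (ht hzK)
  exact mem_biUnion hyt ⟨hk, z, hz, hzU⟩

theorem eventually_iteratedDerivWithin_sub_partialSum_eq_zero
    (hf : IsPliableSeries a b c f k₀ cs g) (hab : a < b) {ε : ℝ} (hε : 0 < ε) :
    ∀ᶠ l in atTop, ∀ i : ℕ, ∀ x ∈ Icc a b, ε ≤ |x - c| →
      iteratedDerivWithin i (fun y => f y - ∑ k ∈ Finset.Icc k₀ l, cs k * g k y)
        (Icc a b) x = 0 := by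
  have hcont : Continuous fun y : ℝ => |y - c| := (continuous_id.sub continuous_const).abs
  have hfar :
      {k | k₀ ≤ k ∧ (suppOn a b (g k) ∩ {y ∈ Icc a b | ε / 2 ≤ |y - c|}).Nonempty}.Finite :=
    hf.finite_setOf_suppOn_inter_nonempty
      (isCompact_Icc.inter_right (isClosed_le continuous_const hcont))
      fun y hy => ⟨hy.1, fun hyc => by
        have hyε := hy.2
        rw [mem_singleton_iff.1 hyc, sub_self, abs_zero] at hyε
        linarith⟩
  obtain ⟨N, hN⟩ := hfar.bddAbove
  filter_upwards [eventually_ge_atTop N] with l hl i x hx hxc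
  have hU : {y | ε / 2 < |y - c|} ∈ 𝓝 x :=
    (isOpen_lt continuous_const hcont).mem_nhds (show ε / 2 < |x - c| by linarith)
  have hnone : ∀ k, k₀ ≤ k → l < k → (suppOn a b (g k) ∩ {y | ε / 2 < |y - c|}).Nonempty →
      k ∈ (∅ : Finset ℤ) := fun k hk hlk ⟨y, hys, hyU⟩ =>
    absurd ((hN ⟨hk, y, hys, (hf.supp_subset k hk hys).1, hyU.le⟩).trans hl) (not_le.2 hlk)
  simpa using hf.abs_iteratedDerivWithin_sub_partialSum_le hab (le_refl i) hx hU l hnone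

theorem exists_abs_iteratedDerivWithin_sub_partialSum_le (hf : IsPliableSeries a b c f k₀ cs g)
    (hab : a < b) :
    ∃ L : ℕ, ∀ (l : ℤ) {r i : ℕ}, i ≤ r → ∀ {η : ℝ}, 0 ≤ η → ∀ x ∈ Icc a b,
      0 < |x - c| → 2 * |x - c| < b - a →
      (∀ k, k₀ ≤ k → (2 : ℝ) ^ (-(k : ℝ) * L) ≤ |x - c| →
        cs k * CrNorm r (g k) (Icc a b) ≤ η) →
      |iteratedDerivWithin i (fun y => f y - ∑ k ∈ Finset.Icc k₀ l, cs k * g k y) (Icc a b) x|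
        ≤ 2 * L * η := by
  obtain ⟨L, -, hL⟩ := hf.index_bound
  refine ⟨L, fun l r i hi η hη x hx hxc hxb hM => ?_⟩
  set ε := |x - c|
  obtain ⟨hfin₁, hcard₁, hlow₁⟩ := hL ε hxc hxb
  obtain ⟨hfin₂, hcard₂, hlow₂⟩ := hL (ε / 2) (by positivity) (by linarith)
  have hcont : Continuous fun y : ℝ => |y - c| := (continuous_id.sub continuous_const).abs
  have hU : {y | ε / 2 < |y - c| ∧ |y - c| < 2 * ε} ∈ 𝓝 x :=
    ((isOpen_lt continuous_const hcont).inter (isOpen_lt hcont continuous_const)).mem_nhds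
      (show ε / 2 < ε ∧ ε < 2 * ε from ⟨by linarith, by linarith⟩)
  set E := hfin₁.toFinset ∪ hfin₂.toFinset
  have hlowE : ∀ k ∈ E, k₀ ≤ k ∧ (2 : ℝ) ^ (-(k : ℝ) * L) ≤ ε := by
    intro k hk
    rcases Finset.mem_union.1 hk with hk | hk
    · obtain ⟨hk₀, hks⟩ := hfin₁.mem_toFinset.1 hk
      exact ⟨hk₀, hlow₁ k hk₀ hks⟩
    · obtain ⟨hk₀, hks⟩ := hfin₂.mem_toFinset.1 hk
      exact ⟨hk₀, (hlow₂ k hk₀ hks).trans (by linarith)⟩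
  have hcardE : (E.card : ℝ) ≤ 2 * L := by
    rw [ncard_eq_toFinset_card _ hfin₁] at hcard₁
    rw [ncard_eq_toFinset_card _ hfin₂] at hcard₂
    have hcard : E.card ≤ L + L := (Finset.card_union_le _ _).trans (add_le_add hcard₁ hcard₂)
    rw [two_mul]
    exact_mod_cast hcard
  have hbound := hf.abs_iteratedDerivWithin_sub_partialSum_le hab hi hx hU l (E := E)
    fun k hk _ ⟨y, hys, hy₁, hy₂⟩ => by
      have hyJ := (hf.supp_subset k hk hys).1
      rcases le_or_gt |y - c| ε with hyε | hyε
      · exact Finset.mem_union_right _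
          (hfin₂.mem_toFinset.2 ⟨hk, y, hys, hyJ, hy₁.le, by linarith⟩)
      · exact Finset.mem_union_left _
          (hfin₁.mem_toFinset.2 ⟨hk, y, hys, hyJ, hyε.le, hy₂.le⟩)
  calc _ ≤ _ := hbound
    _ ≤ ∑ _k ∈ E.filter (fun k => k₀ ≤ k ∧ l < k), η := Finset.sum_le_sum fun k hk =>
        hM k (hlowE k (Finset.mem_filter.1 hk).1).1 (hlowE k (Finset.mem_filter.1 hk).1).2
    _ ≤ E.card * η := by
        rw [Finset.sum_const, nsmul_eq_mul]
        gcongr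
        exact Finset.filter_subset _ E
    _ ≤ 2 * L * η := by gcongr

theorem eventually_CrNorm_sub_partialSum_le (hf : IsPliableSeries a b c f k₀ cs g)
    (hab : a < b) (hfsm : ContDiffOn ℝ (⊤ : ℕ∞) f (Icc a b)) (r : ℕ) :
    ∃ C : ℝ, ∀ η > 0, ∀ᶠ l in atTop,
      CrNorm r (fun x => f x - ∑ k ∈ Finset.Icc k₀ l, cs k * g k x) (Icc a b) ≤ C * η := by
  obtain ⟨L, hL⟩ := hf.exists_abs_iteratedDerivWithin_sub_partialSum_le hab
  refine ⟨(r + 1) * (2 * L), fun η hη => ?_⟩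
  obtain ⟨K, hK⟩ := eventually_atTop.1 ((hf.tendsto_mul_CrNorm r).eventually (ge_mem_nhds hη))
  set ε₀ := min ((2 : ℝ) ^ (-(K : ℝ) * L)) ((b - a) / 2)
  have hε₀ : 0 < ε₀ := lt_min (by positivity) (by linarith)
  filter_upwards [hf.eventually_iteratedDerivWithin_sub_partialSum_eq_zero hab hε₀] with l hl
  have hsmooth : ContDiffOn ℝ r (fun x => f x - ∑ k ∈ Finset.Icc k₀ l, cs k * g k x) (Icc a b) :=
    (hfsm.sub (ContDiffOn.sum fun k hk => contDiffOn_const.mul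
      (hf.g_smooth k (Finset.mem_Icc.1 hk).1))).of_le (by exact_mod_cast le_top)
  rw [mul_assoc]
  refine CrNorm_Icc_le_of_forall_ne (c := c) hab hsmooth (by positivity) fun i hi x hx hxc => ?_
  rcases le_or_gt ε₀ |x - c| with hfar | hnear
  · rw [hl i x hx hfar, abs_zero]
    positivity
  refine hL l hi hη.le x hx (abs_pos.2 (sub_ne_zero.2 hxc))
    (by linarith [min_le_right ((2 : ℝ) ^ (-(K : ℝ) * L)) ((b - a) / 2)]) fun k _ hkx => hK k ?_
  -- `2^{-kL} ≤ |x - c| < ε₀ ≤ 2^{-KL}` forces `K < k`.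
  have hexp := (Real.rpow_lt_rpow_left_iff one_lt_two).1
    (hkx.trans_lt (hnear.trans_le (min_le_left _ _)))
  have hL0 : (0 : ℝ) ≤ L := Nat.cast_nonneg L
  have hKk : (K : ℝ) ≤ k := by nlinarith
  exact_mod_cast hKk

end IsPliableSeries

theorem stmt10_general (a b c : ℝ) (hab : a < b)
    (f : ℝ → ℝ) (hfsm : ContDiffOn ℝ (⊤ : ℕ∞) f (Set.Icc a b))
    (k₀ : ℤ) (cs : ℤ → ℝ) (g : ℤ → ℝ → ℝ)
    (hf : IsPliableSeries a b c f k₀ cs g) :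
    ∀ r : ℕ,
      Tendsto (fun l : ℤ =>
          CrNorm r (fun x => f x - ∑ k ∈ Finset.Icc k₀ l, cs k * g k x) (Set.Icc a b))
        atTop (𝓝 0) := by
  intro r
  obtain ⟨C, hC⟩ := hf.eventually_CrNorm_sub_partialSum_le hab hfsm r
  exact tendsto_zero_of_forall_eventually_le_mul C (fun _ => CrNorm_nonneg _ _ _) hC

/-- Lemma 4.1(a) of the paper. The partial sums of a pliable series of
`f` converge to `f` in every `C^r` norm on `J = [a,b]`. -/
theorem stmt10 (a b c : ℝ) (hab : a < b) (hc : c = a ∨ c = b)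
    (f : ℝ → ℝ) (hfsm : ContDiffOn ℝ (⊤ : ℕ∞) f (Set.Icc a b))
    (k₀ : ℤ) (cs : ℤ → ℝ) (g : ℤ → ℝ → ℝ)
    (hf : IsPliableSeries a b c f k₀ cs g) :
    ∀ r : ℕ,
      Tendsto (fun l : ℤ =>
          CrNorm r (fun x => f x - ∑ k ∈ Finset.Icc k₀ l, cs k * g k x) (Set.Icc a b))
        atTop (𝓝 0) :=
  stmt10_general a b c hab f hfsm k₀ cs g hf
end
end

section
/- Let J ⊂ ℝ be a compact interval, c an endpoint of J, and f ∈ C^∞(J) pliable at c. Then for every h ∈ C^∞(J) and every g ∈ C^∞(J) whose support is contained in J∖{c}, the function h·f + g is pliable at c. -/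
open Set Filter Topology

noncomputable section

lemma bddAbove_iterAbs {a b : ℝ} (hab : a < b) {u : ℝ → ℝ}
    (hu : ContDiffOn ℝ (⊤ : ℕ∞) u (Set.Icc a b)) (i : ℕ) :
    BddAbove (Set.range fun x : Set.Icc a b => |iteratedDerivWithin i u (Set.Icc a b) x|) := by
  have hc : ContinuousOn (fun x => |iteratedDerivWithin i u (Set.Icc a b) x|) (Set.Icc a b) :=
    (hu.continuousOn_iteratedDerivWithin (by exact_mod_cast le_top) (uniqueDiffOn_Icc hab)).abs
  have := (isCompact_Icc.image_of_continuousOn hc).bddAbove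
  rwa [Set.image_eq_range] at this

lemma crNorm_nonneg (r : ℕ) (u : ℝ → ℝ) (J : Set ℝ) : 0 ≤ CrNorm r u J :=
  Finset.sum_nonneg fun _ _ => Real.iSup_nonneg fun _ => abs_nonneg _

lemma abs_iter_le_crNorm {a b : ℝ} (hab : a < b) {u : ℝ → ℝ}
    (hu : ContDiffOn ℝ (⊤ : ℕ∞) u (Set.Icc a b)) {i r : ℕ} (hir : i ≤ r)
    {x : ℝ} (hx : x ∈ Set.Icc a b) :
    |iteratedDerivWithin i u (Set.Icc a b) x| ≤ CrNorm r u (Set.Icc a b) := by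
  have h1 : |iteratedDerivWithin i u (Set.Icc a b) x| ≤
      ⨆ y : Set.Icc a b, |iteratedDerivWithin i u (Set.Icc a b) y| :=
    le_ciSup (bddAbove_iterAbs hab hu i) (⟨x, hx⟩ : Set.Icc a b)
  refine h1.trans ?_
  exact Finset.single_le_sum (f := fun i => ⨆ y : Set.Icc a b, |iteratedDerivWithin i u (Set.Icc a b) y|)
    (fun j _ => Real.iSup_nonneg fun _ => abs_nonneg _) (Finset.mem_range.2 (Nat.lt_succ_of_le hir))

lemma crNorm_mul_le {a b : ℝ} (hab : a < b) {h u : ℝ → ℝ}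
    (hh : ContDiffOn ℝ (⊤ : ℕ∞) h (Set.Icc a b))
    (hu : ContDiffOn ℝ (⊤ : ℕ∞) u (Set.Icc a b)) (r : ℕ) :
    CrNorm r (fun x => h x * u x) (Set.Icc a b) ≤
      ((r + 1 : ℝ) * 2 ^ r * CrNorm r h (Set.Icc a b)) * CrNorm r u (Set.Icc a b) := by
  set J := Set.Icc a b with hJ
  have hne : Nonempty J := ⟨⟨a, by simp [hJ, le_of_lt hab]⟩⟩
  have hCh := crNorm_nonneg r h J
  have hCu := crNorm_nonneg r u J
  have key : ∀ i ≤ r, ∀ x : J, |iteratedDerivWithin i (fun x => h x * u x) J (x : ℝ)| ≤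
      2 ^ r * CrNorm r h J * CrNorm r u J := by
    intro i hir x
    have hx : (x : ℝ) ∈ J := x.2
    have hrel : ∀ (n : ℕ) (v : ℝ → ℝ) (y : ℝ),
        ‖iteratedFDerivWithin ℝ n v J y‖ = |iteratedDerivWithin n v J y| := by
      intro n v y
      rw [norm_iteratedFDerivWithin_eq_norm_iteratedDerivWithin, Real.norm_eq_abs]
    have hmul := norm_iteratedFDerivWithin_mul_le (𝕜 := ℝ) (A := ℝ) (N := (⊤ : ℕ∞))
      hh hu (uniqueDiffOn_Icc hab) hx (n := i) (by exact_mod_cast le_top)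
    rw [hrel] at hmul
    refine hmul.trans ?_
    have hsum : ∑ j ∈ Finset.range (i + 1), (i.choose j : ℝ) *
        ‖iteratedFDerivWithin ℝ j h J (x : ℝ)‖ * ‖iteratedFDerivWithin ℝ (i - j) u J (x : ℝ)‖ ≤
        ∑ j ∈ Finset.range (i + 1), (i.choose j : ℝ) * CrNorm r h J * CrNorm r u J := by
      refine Finset.sum_le_sum fun j hj => ?_
      have hji : j ≤ r := le_trans (Nat.lt_succ_iff.mp (Finset.mem_range.mp hj)) hir
      have h1 : ‖iteratedFDerivWithin ℝ j h J (x : ℝ)‖ ≤ CrNorm r h J := by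
        rw [hrel]; exact abs_iter_le_crNorm hab hh hji hx
      have h2 : ‖iteratedFDerivWithin ℝ (i - j) u J (x : ℝ)‖ ≤ CrNorm r u J := by
        rw [hrel]; exact abs_iter_le_crNorm hab hu (le_trans (Nat.sub_le i j) hir) hx
      have hc : (0 : ℝ) ≤ (i.choose j : ℝ) := Nat.cast_nonneg _
      calc (i.choose j : ℝ) * ‖iteratedFDerivWithin ℝ j h J (x : ℝ)‖ *
            ‖iteratedFDerivWithin ℝ (i - j) u J (x : ℝ)‖
          ≤ (i.choose j : ℝ) * CrNorm r h J * ‖iteratedFDerivWithin ℝ (i - j) u J (x : ℝ)‖ := by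
            apply mul_le_mul_of_nonneg_right _ (norm_nonneg _)
            exact mul_le_mul_of_nonneg_left h1 hc
        _ ≤ (i.choose j : ℝ) * CrNorm r h J * CrNorm r u J := by
            apply mul_le_mul_of_nonneg_left h2 (mul_nonneg hc hCh)
    refine hsum.trans ?_
    have : ∑ j ∈ Finset.range (i + 1), (i.choose j : ℝ) * CrNorm r h J * CrNorm r u J =
        (2 ^ i : ℝ) * CrNorm r h J * CrNorm r u J := by
      rw [← Finset.sum_mul, ← Finset.sum_mul]
      norm_cast
      rw [Nat.sum_range_choose]
    rw [this]
    have h2i : (2 ^ i : ℝ) ≤ 2 ^ r := by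
      exact_mod_cast Nat.pow_le_pow_right (by norm_num) hir
    apply mul_le_mul_of_nonneg_right _ hCu
    exact mul_le_mul_of_nonneg_right h2i hCh
  unfold CrNorm
  calc ∑ i ∈ Finset.range (r + 1), ⨆ x : J, |iteratedDerivWithin i (fun x => h x * u x) J (x : ℝ)|
      ≤ ∑ i ∈ Finset.range (r + 1), 2 ^ r * CrNorm r h J * CrNorm r u J := by
        refine Finset.sum_le_sum fun i hi => ?_
        exact ciSup_le fun x => key i (Nat.lt_succ_iff.mp (Finset.mem_range.mp hi)) x
    _ = ((r + 1 : ℝ) * 2 ^ r * CrNorm r h J) * CrNorm r u J := by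
        rw [Finset.sum_const, Finset.card_range]
        push_cast; ring

lemma suppOn_mul_subset (a b : ℝ) (h u : ℝ → ℝ) :
    suppOn a b (fun x => h x * u x) ⊆ suppOn a b u := by
  apply closure_mono
  rintro x ⟨hx1, hx2⟩
  exact ⟨hx1, fun h0 => hx2 (show h x * u x = 0 by rw [h0, mul_zero])⟩

lemma suppOn_subset_Icc (a b : ℝ) (u : ℝ → ℝ) : suppOn a b u ⊆ Set.Icc a b :=
  closure_minimal (fun x hx => hx.1) isClosed_Icc

/-- Lemma 4.1(c) of the paper. If `f` is pliable at the endpoint `c` of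
`J = [a,b]`, `h ∈ C^∞(J)` and `g ∈ C^∞(J)` has support contained in `J ∖ {c}`, then
`h·f + g` is pliable at `c`. -/
theorem stmt12 (a b c : ℝ) (hab : a < b) (hc : c = a ∨ c = b)
    (f : ℝ → ℝ) (hfsm : ContDiffOn ℝ (⊤ : ℕ∞) f (Set.Icc a b))
    (hfpl : Pliable a b c f)
    (h : ℝ → ℝ) (hhsm : ContDiffOn ℝ (⊤ : ℕ∞) h (Set.Icc a b))
    (g : ℝ → ℝ) (hgsm : ContDiffOn ℝ (⊤ : ℕ∞) g (Set.Icc a b))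
    (hgsupp : suppOn a b g ⊆ Set.Icc a b \ {c}) :
    Pliable a b c (fun x => h x * f x + g x) := by
  obtain ⟨k₀, cs, gs, hS⟩ := hfpl
  -- the support of g is compact and at distance ≥ δ from c
  have hsuppg_cpt : IsCompact (suppOn a b g) :=
    IsCompact.of_isClosed_subset isCompact_Icc isClosed_closure (suppOn_subset_Icc a b g)
  obtain ⟨δ, hδpos, hδ⟩ : ∃ δ : ℝ, 0 < δ ∧ ∀ x ∈ suppOn a b g, δ ≤ |x - c| := by
    by_cases hne : (suppOn a b g).Nonempty
    · obtain ⟨x₀, hx₀, hmin⟩ := hsuppg_cpt.exists_isMinOn hne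
        ((continuous_abs.comp (continuous_id.sub continuous_const)).continuousOn)
      refine ⟨|x₀ - c|, ?_, fun x hx => isMinOn_iff.mp hmin x hx⟩
      have hx₀c : x₀ ≠ c := fun hxc => (hgsupp hx₀).2 (by simp [hxc])
      exact abs_pos.mpr (sub_ne_zero.2 hx₀c)
    · exact ⟨1, one_pos, fun x hx => absurd ⟨x, hx⟩ hne⟩
  -- choose a large natural number n₁
  obtain ⟨n₀, hn₀⟩ : ∃ n : ℕ, (2 : ℝ) ^ (-(n : ℝ)) ≤ δ / 2 := by
    obtain ⟨n, hn⟩ := exists_pow_lt_of_lt_one (half_pos hδpos) (by norm_num : (1 / 2 : ℝ) < 1)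
    refine ⟨n, le_of_lt ?_⟩
    have : (2 : ℝ) ^ (-(n : ℝ)) = (1 / 2 : ℝ) ^ n := by
      rw [Real.rpow_neg (by norm_num), Real.rpow_natCast]
      simp [one_div, inv_pow]
    rwa [this]
  set n₁ : ℕ := max n₀ k₀.toNat with hn₁def
  have hn₁n₀ : (2 : ℝ) ^ (-(n₁ : ℝ)) ≤ δ / 2 := by
    refine le_trans ?_ hn₀
    apply Real.rpow_le_rpow_of_exponent_le one_le_two
    simp only [neg_le_neg_iff, Nat.cast_le, hn₁def]
    exact le_max_left _ _
  set K : ℤ := (n₁ : ℤ) with hKdef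
  set m : ℤ := (n₁ : ℤ) + 1 - k₀ with hmdef
  have hm0 : 0 ≤ m := by
    have : k₀ ≤ (k₀.toNat : ℤ) := Int.self_le_toNat k₀
    have : (k₀.toNat : ℤ) ≤ (n₁ : ℤ) := by exact_mod_cast le_max_right n₀ k₀.toNat
    omega
  have hK0 : 0 ≤ K := by positivity
  set cs' : ℤ → ℝ := fun k => if k = K then 1 else cs (k - m) with hcs'def
  set gs' : ℤ → ℝ → ℝ := fun k => if k = K then g else fun x => h x * gs (k - m) x with hgs'def
  have hgs'K : gs' K = g := by simp [hgs'def]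
  have hgs'ne : ∀ k : ℤ, k ≠ K → gs' k = fun x => h x * gs (k - m) x := by
    intro k hk; simp [hgs'def, hk]
  have hsupp'ne : ∀ k : ℤ, k ≠ K → suppOn a b (gs' k) ⊆ suppOn a b (gs (k - m)) := by
    intro k hk; rw [hgs'ne k hk]; exact suppOn_mul_subset a b h (gs (k - m))
  refine ⟨K, cs', gs', ⟨?_, ?_, ?_, ?_, ?_, ?_, ?_, ?_, ?_⟩⟩
  · -- sum_eq
    intro x hx
    set F : ℤ → ℝ := fun k => cs' k * gs' k x with hFdef
    have hbase : HasSum (fun j : {k : ℤ // k₀ ≤ k} => h x * (cs j.val * gs j.val x)) (h x * f x) :=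
      (hS.sum_eq x hx).mul_left (h x)
    have hEq : (fun j : {k : ℤ // k₀ ≤ k} => F (j.val + m)) =
        fun j : {k : ℤ // k₀ ≤ k} => h x * (cs j.val * gs j.val x) := by
      funext j
      have hne : j.val + m ≠ K := by have := j.2; omega
      simp only [hFdef, hcs'def, hgs'def, if_neg hne, add_sub_cancel_right]
      ring
    rw [← hEq] at hbase
    let e : {k : ℤ // k₀ ≤ k} ≃ ↥(Set.Ici (K + 1)) :=
      { toFun := fun j => ⟨j.val + m, by have := j.2; simp only [Set.mem_Ici]; omega⟩
        invFun := fun k => ⟨k.val - m, by have := k.2; simp only [Set.mem_Ici] at this; omega⟩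
        left_inv := fun j => by ext; simp
        right_inv := fun k => by ext; simp }
    have hbase2 : HasSum ((F ∘ ((↑) : (Set.Ici (K + 1)) → ℤ)) ∘ e) (h x * f x) := hbase
    have h1 : HasSum (F ∘ ((↑) : (Set.Ici (K + 1)) → ℤ)) (h x * f x) :=
      e.hasSum_iff.mp hbase2
    have h2 : HasSum (F ∘ ((↑) : (({K} : Set ℤ)) → ℤ)) (g x) := by
      have hFK : F K = g x := by simp [hFdef, hcs'def, hgs'def]
      have h2' : HasSum (({K} : Set ℤ).restrict F) (F K) := hasSum_singleton K F
      rw [hFK] at h2'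
      exact h2'
    have hdisj : Disjoint (Set.Ici (K + 1)) ({K} : Set ℤ) := by
      simp only [Set.disjoint_singleton_right, Set.mem_Ici]
      omega
    have h3 : HasSum (F ∘ ((↑) : ((Set.Ici (K + 1) ∪ {K} : Set ℤ)) → ℤ)) (h x * f x + g x) :=
      HasSum.add_disjoint hdisj h1 h2
    have hset : Set.Ici (K + 1) ∪ ({K} : Set ℤ) = Set.Ici K := by
      ext k; simp only [Set.mem_union, Set.mem_Ici, Set.mem_singleton_iff]; omega
    rw [hset] at h3
    exact h3
  · -- cs_pos
    intro k hk
    by_cases hkK : k = K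
    · simp [hcs'def, hkK]
    · rw [hcs'def]; simp only [if_neg hkK]
      exact hS.cs_pos (k - m) (by omega)
  · -- cs_superexp
    intro γ
    have base := hS.cs_superexp γ
    have shift : Tendsto (fun k : ℤ => k - m) atTop atTop :=
      tendsto_atTop_add_const_right atTop (-m) tendsto_id
    have comp := (base.comp shift).const_mul ((2 : ℝ) ^ (γ * (m : ℝ)))
    rw [mul_zero] at comp
    refine comp.congr' ?_
    filter_upwards [Filter.eventually_ge_atTop (K + 1)] with k hk
    have hkK : k ≠ K := by omega
    have hexp : (2 : ℝ) ^ (γ * (m : ℝ)) * (2 : ℝ) ^ (γ * ((k - m : ℤ) : ℝ)) =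
        (2 : ℝ) ^ (γ * (k : ℝ)) := by
      rw [← Real.rpow_add (by norm_num : (0 : ℝ) < 2)]
      congr 1
      push_cast
      ring
    simp only [Function.comp, hcs'def, if_neg hkK]
    rw [← mul_assoc, hexp]
  · -- g_smooth
    intro k hk
    by_cases hkK : k = K
    · rw [hkK, hgs'K]; exact hgsm
    · rw [hgs'ne k hkK]
      exact hhsm.mul (hS.g_smooth (k - m) (by omega))
  · -- supp_compact
    intro k hk
    by_cases hkK : k = K
    · rw [hkK, hgs'K]; exact hsuppg_cpt
    · exact IsCompact.of_isClosed_subset (hS.supp_compact (k - m) (by omega))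
        isClosed_closure (hsupp'ne k hkK)
  · -- supp_subset
    intro k hk
    by_cases hkK : k = K
    · rw [hkK, hgs'K]; exact hgsupp
    · exact (hsupp'ne k hkK).trans (hS.supp_subset (k - m) (by omega))
  · -- supp_locFin
    intro x hx
    obtain ⟨U, hU, hfin⟩ := hS.supp_locFin x hx
    refine ⟨U, hU, ?_⟩
    refine Set.Finite.subset ((hfin.image (· + m)).insert K) ?_
    rintro k ⟨hk1, hk2⟩
    by_cases hkK : k = K
    · exact Set.mem_insert_iff.2 (Or.inl hkK)
    · refine Set.mem_insert_iff.2 (Or.inr ⟨k - m, ⟨by omega, ?_⟩, by ring⟩)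
      exact hk2.mono (Set.inter_subset_inter_left U (hsupp'ne k hkK))
  · -- norm_growth
    intro r
    obtain ⟨γ, M, hγM⟩ := hS.norm_growth r
    set Cr : ℝ := (r + 1 : ℝ) * 2 ^ r * CrNorm r h (Set.Icc a b) with hCrdef
    have hCr : 0 ≤ Cr := by
      apply mul_nonneg (mul_nonneg (by positivity) (by positivity)) (crNorm_nonneg r h _)
    refine ⟨γ, max ((2 : ℝ) ^ (γ * (m : ℝ)) * Cr * M)
      ((2 : ℝ) ^ (γ * (K : ℝ)) * CrNorm r g (Set.Icc a b)), ?_⟩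
    intro k hk
    by_cases hkK : k = K
    · rw [hkK, hgs'K]; exact le_max_right _ _
    · have hk' : k₀ ≤ k - m := by omega
      have hb := hγM (k - m) hk'
      have hmul : CrNorm r (gs' k) (Set.Icc a b) ≤
          Cr * CrNorm r (gs (k - m)) (Set.Icc a b) := by
        rw [hgs'ne k hkK, hCrdef]
        exact crNorm_mul_le hab hhsm (hS.g_smooth (k - m) hk') r
      have hexp : (2 : ℝ) ^ (γ * (k : ℝ)) =
          (2 : ℝ) ^ (γ * (m : ℝ)) * (2 : ℝ) ^ (γ * ((k - m : ℤ) : ℝ)) := by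
        rw [← Real.rpow_add (by norm_num : (0 : ℝ) < 2)]
        congr 1; push_cast; ring
      refine le_trans ?_ (le_max_left _ _)
      calc (2 : ℝ) ^ (γ * (k : ℝ)) * CrNorm r (gs' k) (Set.Icc a b)
          ≤ (2 : ℝ) ^ (γ * (k : ℝ)) * (Cr * CrNorm r (gs (k - m)) (Set.Icc a b)) :=
            mul_le_mul_of_nonneg_left hmul (Real.rpow_nonneg (by norm_num) _)
        _ = ((2 : ℝ) ^ (γ * (m : ℝ)) * Cr) *
            ((2 : ℝ) ^ (γ * ((k - m : ℤ) : ℝ)) * CrNorm r (gs (k - m)) (Set.Icc a b)) := by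
            rw [hexp]; ring
        _ ≤ ((2 : ℝ) ^ (γ * (m : ℝ)) * Cr) * M := by
            apply mul_le_mul_of_nonneg_left hb
            exact mul_nonneg (Real.rpow_nonneg (by norm_num) _) hCr
        _ = (2 : ℝ) ^ (γ * (m : ℝ)) * Cr * M := by ring
  · -- index_bound
    obtain ⟨L, hLpos, hL⟩ := hS.index_bound
    refine ⟨L + 1, Nat.succ_pos _, ?_⟩
    intro ε hε hε2
    obtain ⟨hfin, hcard, hbd⟩ := hL ε hε hε2
    set A : Set ℝ := {x ∈ Set.Icc a b | ε ≤ |x - c| ∧ |x - c| ≤ 2 * ε} with hAdef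
    set Sold : Set ℤ := {k : ℤ | k₀ ≤ k ∧ (suppOn a b (gs k) ∩ A).Nonempty} with hSolddef
    set Snew : Set ℤ := {k : ℤ | K ≤ k ∧ (suppOn a b (gs' k) ∩ A).Nonempty} with hSnewdef
    have hsub : Snew ⊆ insert K ((· + m) '' Sold) := by
      rintro k ⟨hk1, hk2⟩
      by_cases hkK : k = K
      · exact Set.mem_insert_iff.2 (Or.inl hkK)
      · refine Set.mem_insert_iff.2 (Or.inr ⟨k - m, ⟨by omega, ?_⟩, by ring⟩)
        exact hk2.mono (Set.inter_subset_inter_left A (hsupp'ne k hkK))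
    have hfin' : Snew.Finite := ((hfin.image (· + m)).insert K).subset hsub
    refine ⟨hfin', ?_, ?_⟩
    · calc Snew.ncard ≤ (insert K ((· + m) '' Sold)).ncard :=
            Set.ncard_le_ncard hsub ((hfin.image (· + m)).insert K)
        _ ≤ ((· + m) '' Sold).ncard + 1 := Set.ncard_insert_le _ _
        _ ≤ Sold.ncard + 1 := by
            have := Set.ncard_image_le (f := (· + m)) (s := Sold) hfin
            omega
        _ ≤ L + 1 := by omega
    · intro k hk hne
      by_cases hkK : k = K
      · subst hkK
        rw [hgs'K] at hne
        obtain ⟨x, hxs, hxA⟩ := hne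
        have hδx : δ ≤ |x - c| := hδ x hxs
        have hεδ : δ / 2 ≤ ε := by
          have := hxA.2.2
          linarith
        have hKn : (2 : ℝ) ^ (-(K : ℝ) * ((L + 1 : ℕ) : ℝ)) ≤ (2 : ℝ) ^ (-(n₁ : ℝ)) := by
          apply Real.rpow_le_rpow_of_exponent_le one_le_two
          have h1 : ((K : ℝ)) = (n₁ : ℝ) := by rw [hKdef]; push_cast; ring
          rw [h1]
          have h2 : (1 : ℝ) ≤ ((L + 1 : ℕ) : ℝ) := by
            have : (1 : ℕ) ≤ L + 1 := by omega
            exact_mod_cast this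
          nlinarith [Nat.cast_nonneg (α := ℝ) n₁]
        linarith [hn₁n₀]
      · have hk' : k₀ ≤ k - m := by omega
        have hmem : (suppOn a b (gs (k - m)) ∩ A).Nonempty :=
          hne.mono (Set.inter_subset_inter_left A (hsupp'ne k hkK))
        have hold := hbd (k - m) hk' hmem
        refine le_trans ?_ hold
        apply Real.rpow_le_rpow_of_exponent_le one_le_two
        have hkK1 : K + 1 ≤ k := by omega
        have hk0 : (0 : ℝ) ≤ (k : ℝ) := by exact_mod_cast (by omega : (0:ℤ) ≤ k)
        have hm0' : (0 : ℝ) ≤ (m : ℝ) := by exact_mod_cast hm0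
        have hL0 : (0 : ℝ) ≤ (L : ℝ) := Nat.cast_nonneg _
        push_cast
        nlinarith [mul_nonneg hm0' hL0]
end
end
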